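/- arXiv:2105.13750 — 3 statements merged into one kernel-verified Lean document; each statement's English description precedes it below -/
import Mathlib

section
/- The map sending a partition λ of n with empty k-core to its k-quotient (λ^0, λ^1, …, λ^{k-1}) is a bijection onto the set of k-tuples of partitions whose sizes sum to n/k. -/
open Finset Polynomial PowerSeries
open scoped Classical

namespace BorderStrips

/-- Two cells of a Young diagram are adjacent if they share an edge. -/
def Adj (x y : ℕ × ℕ) : Prop :=
  (x.1 = y.1 ∧ (x.2 = y.2 + 1 ∨ y.2 = x.2 + 1)) ∨
  (x.2 = y.2 ∧ (x.1 = y.1 + 1 ∨ y.1 = x.1 + 1))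

/-- A set of cells is connected: any two cells are joined by a path of adjacent cells. -/
def ConnectedCells (S : Finset (ℕ × ℕ)) : Prop :=
  ∀ x ∈ S, ∀ y ∈ S, Relation.ReflTransGen (fun a b => a ∈ S ∧ b ∈ S ∧ Adj a b) x y

/-- A set of cells contains no 2×2 square. -/
def NoTwoByTwo (S : Finset (ℕ × ℕ)) : Prop :=
  ¬ ∃ i j : ℕ, (i, j) ∈ S ∧ (i + 1, j) ∈ S ∧ (i, j + 1) ∈ S ∧ (i + 1, j + 1) ∈ S

/-- `mu ⊆ lam` and `lam \ mu` is a border strip (connected, no 2×2 square) of size `k`. -/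
def IsBorderStripOfSize (k : ℕ) (mu lam : YoungDiagram) : Prop :=
  mu.cells ⊆ lam.cells ∧ (lam.cells \ mu.cells).card = k ∧
    ConnectedCells (lam.cells \ mu.cells) ∧ NoTwoByTwo (lam.cells \ mu.cells)

/-- Height of a strip: number of rows spanned minus one. -/
def stripHeight (S : Finset (ℕ × ℕ)) : ℕ := (S.image Prod.fst).card - 1

/-- Content of a cell: column minus row. -/
def contentZ (x : ℕ × ℕ) : ℤ := (x.2 : ℤ) - (x.1 : ℤ)

/-- A tail of a strip: a cell of minimal content. -/
def IsTail (S : Finset (ℕ × ℕ)) (x : ℕ × ℕ) : Prop :=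
  x ∈ S ∧ ∀ y ∈ S, contentZ x ≤ contentZ y

noncomputable def tailCell (S : Finset (ℕ × ℕ)) : ℕ × ℕ :=
  if h : ∃ x, IsTail S x then h.choose else (0, 0)

/-- A border strip tableau of shape `lam` with `m` strips, each of size `k`,
viewed as a flag of Young diagrams. (For `k = 1`, `m = |lam|` these are exactly
the standard Young tableaux of shape `lam`.) -/
structure BST (lam : YoungDiagram) (k m : ℕ) where
  flag : Fin (m + 1) → YoungDiagram
  first : flag 0 = ⊥
  last : flag (Fin.last m) = lam
  strips : ∀ i : Fin m, IsBorderStripOfSize k (flag i.castSucc) (flag i.succ)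

namespace BST

variable {lam : YoungDiagram} {k m : ℕ}

def flagAt (B : BST lam k m) (i : ℕ) : YoungDiagram :=
  B.flag ⟨min i m, by omega⟩

/-- The cells of the strip labelled `i` (labels are 1-based). -/
def stripCells (B : BST lam k m) (i : ℕ) : Finset (ℕ × ℕ) :=
  (B.flagAt i).cells \ (B.flagAt (i - 1)).cells

/-- The height of a border strip tableau: sum of the heights of its strips. -/
def height (B : BST lam k m) : ℕ :=
  ∑ i ∈ Finset.Icc 1 m, stripHeight (B.stripCells i)

/-- `i` is a descent of `B` if the tail of strip `i+1` lies in a strictly lower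
row than the tail of strip `i`. -/
noncomputable def DES (B : BST lam k m) : Finset ℕ :=
  (Finset.Icc 1 (m - 1)).filter fun i =>
    (tailCell (B.stripCells i)).1 < (tailCell (B.stripCells (i + 1))).1

/-- Major index: sum of the descents. -/
noncomputable def maj (B : BST lam k m) : ℕ := ∑ i ∈ B.DES, i

end BST

/-- No border strip of size `k` can be removed from `lam`. -/
def NoRemovableStrip (k : ℕ) (lam : YoungDiagram) : Prop :=
  ¬ ∃ mu : YoungDiagram, IsBorderStripOfSize k mu lam

/-- `lam` has empty `k`-core: removing border strips of size `k` as long as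
possible always terminates at the empty diagram. -/
def EmptyKCore (k : ℕ) (lam : YoungDiagram) : Prop :=
  ∀ mu : YoungDiagram,
    Relation.ReflTransGen (fun a b => IsBorderStripOfSize k b a) lam mu →
    NoRemovableStrip k mu → mu = ⊥

/-- Number of rows after padding to a multiple of `k`. -/
def numRowsPad (k : ℕ) (lam : YoungDiagram) : ℕ :=
  k * ((lam.colLen 0 + k - 1) / k)

/-- The beta-set (first column hook lengths after padding): the positions of
the east steps in the contour path of `lam`. -/
def betaSet (k : ℕ) (lam : YoungDiagram) : Finset ℕ :=
  (Finset.range (numRowsPad k lam)).image fun i =>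
    lam.rowLen i + (numRowsPad k lam - 1 - i)

/-- The cells of the partition encoded by a beta-set `S`: the element `b` of
rank `r` from the top (i.e. with `r` larger elements) gives a row of length
`b` minus the number of smaller elements. -/
def cellsOfBetaSet (S : Finset ℕ) : Finset (ℕ × ℕ) :=
  S.biUnion fun b =>
    (Finset.range (b - (S.filter fun b' => b' < b).card)).image
      fun j => ((S.filter fun b' => b < b').card, j)

/-- The `s`-th component of the `k`-quotient of `lam` (as a set of cells):
obtained from the steps of the contour path whose labels are `≡ s (mod k)`. -/
def kQuotientCells (k : ℕ) (lam : YoungDiagram) (s : Fin k) : Finset (ℕ × ℕ) :=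
  cellsOfBetaSet (((betaSet k lam).filter fun b => b % k = (s : ℕ)).image fun b => b / k)

/-- Hook length of a cell in a cell set: arm + leg + 1. -/
def hookFin (s : Finset (ℕ × ℕ)) (x : ℕ × ℕ) : ℕ :=
  (s.filter fun y => y.1 = x.1 ∧ x.2 < y.2).card +
  (s.filter fun y => y.2 = x.2 ∧ x.1 < y.1).card + 1

def hookMultiset (s : Finset (ℕ × ℕ)) : Multiset ℕ := s.val.map (hookFin s)

def contentMultiset (s : Finset (ℕ × ℕ)) : Multiset ℤ := s.val.map contentZ

/-- A semistandard filling of a cell set (entries 0-based): rows weakly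
increasing, columns strictly increasing, zero outside. -/
def IsSsyt (s : Finset (ℕ × ℕ)) (f : ℕ × ℕ → ℕ) : Prop :=
  (∀ i j1 j2, j1 ≤ j2 → (i, j1) ∈ s → (i, j2) ∈ s → f (i, j1) ≤ f (i, j2)) ∧
  (∀ i1 i2 j, i1 < i2 → (i1, j) ∈ s → (i2, j) ∈ s → f (i1, j) < f (i2, j)) ∧
  (∀ x, x ∉ s → f x = 0)

/-- The principal specialisation `s_lam(1, q, …, q^(m-1))` (so `m` variables):
sum over semistandard tableaux with entries `< m` of `q ^ (sum of entries)`. -/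
noncomputable def schurSpec (lam : YoungDiagram) (m : ℕ) (q : ℂ) : ℂ :=
  ∑ᶠ f : {f : ℕ × ℕ → ℕ // IsSsyt lam.cells f ∧ ∀ x ∈ lam.cells, f x < m},
    q ^ (∑ x ∈ lam.cells, f.1 x)

/-- `s_lam(1, q, …, q^m)` as a polynomial in `q`. -/
noncomputable def schurPoly (lam : YoungDiagram) (m : ℕ) : Polynomial ℤ :=
  ∑ᶠ f : {f : ℕ × ℕ → ℕ // IsSsyt lam.cells f ∧ ∀ x ∈ lam.cells, f x ≤ m},
    Polynomial.X ^ (∑ x ∈ lam.cells, f.1 x)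

/-- `s_lam(1^m)`: the number of semistandard tableaux with entries `< m`
(i.e. with entries in `{1, …, m}` in 1-based convention). -/
noncomputable def ssytCount (s : Finset (ℕ × ℕ)) (m : ℕ) : ℕ :=
  Nat.card {f : ℕ × ℕ → ℕ // IsSsyt s f ∧ ∀ x ∈ s, f x < m}

variable {k : ℕ}

/-- A standard Young tableau tuple: a bijective filling of the cells of the
tuple `Λ` with `1, …, ℓ`, strictly increasing along rows and columns. -/
def IsSYTTuple (Λ : Fin k → Finset (ℕ × ℕ)) (f : Fin k → ℕ × ℕ → ℕ) : Prop :=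
  (∀ s x, x ∉ Λ s → f s x = 0) ∧
  (∀ s x, x ∈ Λ s → f s x ∈ Finset.Icc 1 (∑ t, (Λ t).card)) ∧
  (∀ v ∈ Finset.Icc 1 (∑ t, (Λ t).card),
    ∃! p : Fin k × ℕ × ℕ, p.2 ∈ Λ p.1 ∧ f p.1 p.2 = v) ∧
  (∀ s i j1 j2, j1 < j2 → (i, j1) ∈ Λ s → (i, j2) ∈ Λ s → f s (i, j1) < f s (i, j2)) ∧
  (∀ s i1 i2 j, i1 < i2 → (i1, j) ∈ Λ s → (i2, j) ∈ Λ s → f s (i1, j) < f s (i2, j))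

/-- A semistandard Young tableau tuple (entries 1-based, zero outside). -/
def IsSSYTTuple (Λ : Fin k → Finset (ℕ × ℕ)) (f : Fin k → ℕ × ℕ → ℕ) : Prop :=
  (∀ s x, x ∉ Λ s → f s x = 0) ∧
  (∀ s x, x ∈ Λ s → 1 ≤ f s x) ∧
  (∀ s i j1 j2, j1 ≤ j2 → (i, j1) ∈ Λ s → (i, j2) ∈ Λ s → f s (i, j1) ≤ f s (i, j2)) ∧
  (∀ s i1 i2 j, i1 < i2 → (i1, j) ∈ Λ s → (i2, j) ∈ Λ s → f s (i1, j) < f s (i2, j))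

/-- `v` is a descent of the tuple filling `f`: with `v` in tableau `s` and `v+1`
in tableau `t`, either `s ≤ t` and `c(v) > c(v+1)`, or `s > t` and `c(v) ≥ c(v+1)`. -/
def TupleDescent (Λ : Fin k → Finset (ℕ × ℕ)) (f : Fin k → ℕ × ℕ → ℕ) (v : ℕ) : Prop :=
  ∃ (s t : Fin k) (x y : ℕ × ℕ), x ∈ Λ s ∧ y ∈ Λ t ∧ f s x = v ∧ f t y = v + 1 ∧
    ((s ≤ t ∧ contentZ y < contentZ x) ∨ (t < s ∧ contentZ y ≤ contentZ x))

noncomputable def tupleDES (Λ : Fin k → Finset (ℕ × ℕ)) (f : Fin k → ℕ × ℕ → ℕ) : Finset ℕ :=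
  (Finset.range (∑ t, (Λ t).card)).filter fun v => TupleDescent Λ f v

/-- `idx₁ = k - 1 - s` where `s` is the index of the leftmost tableau containing
an entry equal to `1`. -/
noncomputable def idxOne (Λ : Fin k → Finset (ℕ × ℕ)) (f : Fin k → ℕ × ℕ → ℕ) : ℕ :=
  k - 1 - sInf {s : ℕ | ∃ hs : s < k, ∃ x ∈ Λ ⟨s, hs⟩, f ⟨s, hs⟩ x = 1}

def maxEntry (Λ : Fin k → Finset (ℕ × ℕ)) (f : Fin k → ℕ × ℕ → ℕ) : ℕ :=
  Finset.univ.sup fun s => (Λ s).sup fun x => f s x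

/-- The map `φ`: the cell of `𝒯` containing `s` receives the entry
`1 + d_s + α_1 + ⋯ + α_(s-1)`. -/
noncomputable def phi (Λ : Fin k → Finset (ℕ × ℕ))
    (p : (ℕ → ℕ) × (Fin k → ℕ × ℕ → ℕ)) : Fin k → ℕ × ℕ → ℕ :=
  fun s x =>
    if x ∈ Λ s then
      1 + ((Finset.range (p.2 s x)).filter fun v => TupleDescent Λ p.2 v).card +
        ∑ u ∈ Finset.range (p.2 s x), p.1 u
    else 0

/-- The Young diagram of the partition (2,2,2). -/
def lam222 : YoungDiagram :=
  ⟨Finset.range 3 ×ˢ Finset.range 2, by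
    intro x y h hx
    simp only [Finset.coe_product, Finset.coe_range, Set.mem_prod, Set.mem_Iio] at hx ⊢
    exact ⟨lt_of_le_of_lt h.1 hx.1, lt_of_le_of_lt h.2 hx.2⟩⟩




noncomputable def rk (S : Finset ℕ) (b : ℕ) : ℕ := (S.filter fun b' => b < b').card

lemma rk_lt_card {S : Finset ℕ} {b : ℕ} (hb : b ∈ S) : rk S b < S.card := by
  apply Finset.card_lt_card
  constructor
  · exact Finset.filter_subset _ _
  · intro h
    have := h hb
    simp at this

lemma rk_lt_rk {S : Finset ℕ} {b b' : ℕ} (hb : b ∈ S) (hb' : b' ∈ S) (h : b < b') :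
    rk S b' < rk S b := by
  apply Finset.card_lt_card
  constructor
  · intro x hx
    simp only [Finset.mem_filter] at hx ⊢
    exact ⟨hx.1, lt_trans h hx.2⟩
  · intro hsub
    have : b' ∈ S.filter fun x => b' < x := hsub (by simp [hb', h])
    simp at this

lemma rk_injOn {S : Finset ℕ} : Set.InjOn (rk S) S := by
  intro a ha b hb h
  rcases lt_trichotomy a b with h1 | h1 | h1
  · exact absurd h (by have := rk_lt_rk ha hb h1; omega)
  · exact h1
  · exact absurd h (by have := rk_lt_rk hb ha h1; omega)

lemma rk_image {S : Finset ℕ} : S.image (rk S) = Finset.range S.card := by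
  apply Finset.eq_of_subset_of_card_le
  · intro i hi
    simp only [Finset.mem_image] at hi
    obtain ⟨b, hb, rfl⟩ := hi
    simpa using rk_lt_card hb
  · rw [Finset.card_range, Finset.card_image_of_injOn rk_injOn]

lemma exists_rk_eq {S : Finset ℕ} {i : ℕ} (hi : i < S.card) : ∃ b ∈ S, rk S b = i := by
  have : i ∈ S.image (rk S) := by rw [rk_image]; simpa using hi
  simpa using this

lemma rk_add_filter {S : Finset ℕ} {b : ℕ} (hb : b ∈ S) :
    (S.filter fun b' => b' < b).card + 1 + rk S b = S.card := by
  have h1 : (S.filter fun b' => b' < b).card + (S.filter fun b' => ¬ b' < b).card = S.card :=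
    Finset.card_filter_add_card_filter_not _
  have h2 : (S.filter fun b' => ¬ b' < b) = insert b (S.filter fun b' => b < b') := by
    ext x
    simp only [Finset.mem_filter, Finset.mem_insert, not_lt]
    constructor
    · rintro ⟨hx, hle⟩
      rcases eq_or_lt_of_le hle with h | h
      · exact Or.inl h.symm
      · exact Or.inr ⟨hx, h⟩
    · rintro (rfl | ⟨hx, h⟩)
      · exact ⟨hb, le_refl _⟩
      · exact ⟨hx, le_of_lt h⟩
  have h3 : b ∉ S.filter fun b' => b < b' := by simp
  rw [h2, Finset.card_insert_of_notMem h3] at h1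
  simp only [rk]
  omega

lemma filter_lt_card {S : Finset ℕ} {b : ℕ} (hb : b ∈ S) :
    (S.filter fun b' => b' < b).card = S.card - 1 - rk S b := by
  have := rk_add_filter hb
  omega

lemma card_filter_lt_le {S : Finset ℕ} (b : ℕ) : (S.filter fun b' => b' < b).card ≤ b := by
  calc (S.filter fun b' => b' < b).card ≤ (Finset.range b).card := by
        apply Finset.card_le_card
        intro x hx
        simp only [Finset.mem_filter] at hx
        simpa using hx.2
    _ = b := Finset.card_range b

lemma mem_cellsOfBetaSet {S : Finset ℕ} {i j : ℕ} :
    (i, j) ∈ cellsOfBetaSet S ↔ ∃ b ∈ S, rk S b = i ∧ j + (S.card - 1 - i) < b := by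
  simp only [cellsOfBetaSet, Finset.mem_biUnion, Finset.mem_image, Finset.mem_range]
  constructor
  · rintro ⟨b, hb, j', hj', h⟩
    obtain ⟨h1, rfl⟩ : (S.filter fun b' => b < b').card = i ∧ j' = j :=
      ⟨congrArg Prod.fst h, congrArg Prod.snd h⟩
    refine ⟨b, hb, h1, ?_⟩
    rw [filter_lt_card hb] at hj'
    simp only [rk] at *
    omega
  · rintro ⟨b, hb, hrk, hj⟩
    refine ⟨b, hb, j, ?_, by simp only [rk] at hrk; rw [hrk]⟩
    rw [filter_lt_card hb, hrk]
    omega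


lemma rk_anti {S : Finset ℕ} {b b' : ℕ} (h : b' ≤ b) : rk S b ≤ rk S b' := by
  apply Finset.card_le_card
  intro x hx
  simp only [Finset.mem_filter] at hx ⊢
  exact ⟨hx.1, lt_of_le_of_lt h hx.2⟩

lemma lt_of_rk_lt {S : Finset ℕ} {b b' : ℕ} (h : rk S b' < rk S b) : b < b' := by
  by_contra hc
  exact absurd (rk_anti (S := S) (not_lt.mp hc)) (by omega)

lemma add_sub_rank {S : Finset ℕ} {b b' : ℕ} (hb : b ∈ S) (hb' : b' ∈ S)
    (h : rk S b' ≤ rk S b) : b + (rk S b - rk S b') ≤ b' := by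
  set n := rk S b - rk S b' with hn
  clear_value n
  induction n generalizing b with
  | zero =>
    have : rk S b = rk S b' := by omega
    have := rk_injOn hb hb' this
    omega
  | succ n ih =>
    have h1 : rk S b' < rk S b := by omega
    have h2 : rk S b - 1 < S.card := by have := rk_lt_card hb; omega
    obtain ⟨c, hc, hrkc⟩ := exists_rk_eq h2
    have hbc : b < c := lt_of_rk_lt (S := S) (by omega)
    have := ih hc (by omega) (by omega)
    omega

lemma isLowerSet_cellsOfBetaSet (S : Finset ℕ) : IsLowerSet (↑(cellsOfBetaSet S) : Set (ℕ × ℕ)) := by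
  rintro ⟨i, j⟩ ⟨i', j'⟩ hle hmem
  simp only [Finset.mem_coe] at hmem ⊢
  obtain ⟨hi, hj⟩ : i' ≤ i ∧ j' ≤ j := ⟨hle.1, hle.2⟩
  rw [mem_cellsOfBetaSet] at hmem ⊢
  obtain ⟨b, hb, hrk, hlt⟩ := hmem
  have hicard : i < S.card := hrk ▸ rk_lt_card hb
  obtain ⟨b', hb', hrk'⟩ := exists_rk_eq (show i' < S.card by omega)
  have := add_sub_rank hb hb' (by omega)
  exact ⟨b', hb', hrk', by omega⟩

def diagOf (S : Finset ℕ) : YoungDiagram := ⟨cellsOfBetaSet S, isLowerSet_cellsOfBetaSet S⟩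

lemma mem_diagOf {S : Finset ℕ} {i j : ℕ} :
    (i, j) ∈ diagOf S ↔ ∃ b ∈ S, rk S b = i ∧ j + (S.card - 1 - i) < b :=
  mem_cellsOfBetaSet

lemma rowLen_eq_of {μ : YoungDiagram} {i t : ℕ} (h : ∀ j, (i, j) ∈ μ ↔ j < t) :
    μ.rowLen i = t := by
  rcases Nat.lt_trichotomy (μ.rowLen i) t with hlt | heq | hgt
  · have := (h (μ.rowLen i)).mpr hlt
    rw [YoungDiagram.mem_iff_lt_rowLen] at this
    omega
  · exact heq
  · have := (h t).mp (YoungDiagram.mem_iff_lt_rowLen.mpr hgt)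
    omega

lemma rowLen_diagOf {S : Finset ℕ} {b : ℕ} (hb : b ∈ S) :
    (diagOf S).rowLen (rk S b) = b - (S.card - 1 - rk S b) := by
  apply rowLen_eq_of
  intro j
  rw [mem_diagOf]
  constructor
  · rintro ⟨b', hb', hrk', hlt⟩
    have : b' = b := rk_injOn hb' hb hrk'
    omega
  · intro hj
    have hfc : (S.filter fun b' => b' < b).card = S.card - 1 - rk S b := filter_lt_card hb
    have := card_filter_lt_le (S := S) b
    exact ⟨b, hb, rfl, by omega⟩

lemma rowLen_diagOf_zero {S : Finset ℕ} {i : ℕ} (hi : S.card ≤ i) :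
    (diagOf S).rowLen i = 0 := by
  apply rowLen_eq_of
  intro j
  simp only [Nat.not_lt_zero, iff_false]
  rw [mem_diagOf]
  rintro ⟨b, hb, hrk, -⟩
  have := rk_lt_card hb
  omega

lemma card_cellsOfBetaSet (S : Finset ℕ) :
    (cellsOfBetaSet S).card + ∑ i ∈ Finset.range S.card, i = ∑ b ∈ S, b := by
  have hdisj : ∀ b1 ∈ S, ∀ b2 ∈ S, b1 ≠ b2 → Disjoint
      ((Finset.range (b1 - (S.filter fun b' => b' < b1).card)).image fun j => ((S.filter fun b' => b1 < b').card, j))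
      ((Finset.range (b2 - (S.filter fun b' => b' < b2).card)).image fun j => ((S.filter fun b' => b2 < b').card, j)) := by
    intro b1 h1 b2 h2 hne
    rw [Finset.disjoint_left]
    rintro ⟨i, j⟩ hx1 hx2
    simp only [Finset.mem_image, Finset.mem_range] at hx1 hx2
    obtain ⟨j1, -, he1⟩ := hx1
    obtain ⟨j2, -, he2⟩ := hx2
    have : rk S b1 = rk S b2 := by
      have a1 := congrArg Prod.fst he1
      have a2 := congrArg Prod.fst he2
      simp only [rk]
      simp at a1 a2
      omega
    exact hne (rk_injOn h1 h2 this)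
  have hcard : (cellsOfBetaSet S).card =
      ∑ b ∈ S, (b - (S.card - 1 - rk S b)) := by
    rw [cellsOfBetaSet]
    rw [Finset.card_biUnion hdisj]
    apply Finset.sum_congr rfl
    intro b hb
    rw [Finset.card_image_of_injective _ (fun a b h => by simpa using h),
      Finset.card_range, filter_lt_card hb]
  have hsum2 : ∑ i ∈ Finset.range S.card, i = ∑ b ∈ S, (S.card - 1 - rk S b) := by
    rw [← Finset.sum_range_reflect]
    rw [← rk_image, Finset.sum_image (fun x hx y hy h => rk_injOn hx hy h)]
  rw [hcard, hsum2, ← Finset.sum_add_distrib]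
  apply Finset.sum_congr rfl
  intro b hb
  have h1 : S.card - 1 - rk S b ≤ b := by
    have := filter_lt_card hb
    have := card_filter_lt_le (S := S) b
    omega
  omega


def betaL (L : ℕ) (lam : YoungDiagram) : Finset ℕ :=
  (Finset.range L).image fun i => lam.rowLen i + (L - 1 - i)

lemma betaF_strictAnti {lam : YoungDiagram} {L i j : ℕ} (hij : i < j) (hj : j < L) :
    lam.rowLen j + (L - 1 - j) < lam.rowLen i + (L - 1 - i) := by
  have := lam.rowLen_anti i j (le_of_lt hij)
  omega

lemma mem_betaL {lam : YoungDiagram} {L b : ℕ} :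
    b ∈ betaL L lam ↔ ∃ i < L, lam.rowLen i + (L - 1 - i) = b := by
  simp [betaL]

lemma card_betaL (L : ℕ) (lam : YoungDiagram) : (betaL L lam).card = L := by
  rw [betaL, Finset.card_image_of_injOn, Finset.card_range]
  intro i hi j hj h
  simp only [Finset.coe_range, Set.mem_Iio] at hi hj
  dsimp only at h
  rcases Nat.lt_trichotomy i j with h1 | h1 | h1
  · exact absurd h (by have := betaF_strictAnti (lam := lam) h1 hj; omega)
  · exact h1
  · exact absurd h (by have := betaF_strictAnti (lam := lam) h1 hi; omega)

lemma rk_betaL {lam : YoungDiagram} {L i : ℕ} (hi : i < L) :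
    rk (betaL L lam) (lam.rowLen i + (L - 1 - i)) = i := by
  have hfilter : (betaL L lam).filter (fun b' => lam.rowLen i + (L - 1 - i) < b') =
      (Finset.range i).image fun j => lam.rowLen j + (L - 1 - j) := by
    ext x
    simp only [Finset.mem_filter, mem_betaL, Finset.mem_image, Finset.mem_range]
    constructor
    · rintro ⟨⟨j, hj, rfl⟩, hlt⟩
      refine ⟨j, ?_, rfl⟩
      by_contra hc
      rcases Nat.lt_or_ge j i with h1 | h1
      · exact hc h1
      · rcases Nat.eq_or_lt_of_le h1 with rfl | h1
        · omega
        · have := betaF_strictAnti (lam := lam) h1 hj; omega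
    · rintro ⟨j, hj, rfl⟩
      exact ⟨⟨j, by omega, rfl⟩, betaF_strictAnti hj hi⟩
  rw [rk, hfilter, Finset.card_image_of_injOn, Finset.card_range]
  intro a ha b hb h
  simp only [Finset.coe_range, Set.mem_Iio] at ha hb
  dsimp only at h
  rcases Nat.lt_trichotomy a b with h1 | h1 | h1
  · exact absurd h (by have := betaF_strictAnti (lam := lam) h1 (by omega : b < L); omega)
  · exact h1
  · exact absurd h (by have := betaF_strictAnti (lam := lam) h1 (by omega : a < L); omega)

lemma rowLen_eq_zero_of {lam : YoungDiagram} {i : ℕ} (h : lam.colLen 0 ≤ i) :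
    lam.rowLen i = 0 := by
  by_contra hc
  have : (i, 0) ∈ lam := YoungDiagram.mem_iff_lt_rowLen.mpr (by omega)
  rw [YoungDiagram.mem_iff_lt_colLen] at this
  omega

lemma lt_colLen_of_rowLen_pos {lam : YoungDiagram} {i : ℕ} (h : 0 < lam.rowLen i) :
    i < lam.colLen 0 := by
  by_contra hc
  have := rowLen_eq_zero_of (lam := lam) (i := i) (by omega)
  omega

lemma diagOf_betaL {lam : YoungDiagram} {L : ℕ} (h : lam.colLen 0 ≤ L) :
    diagOf (betaL L lam) = lam := by
  ext ⟨i, j⟩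
  rw [YoungDiagram.mem_cells, YoungDiagram.mem_cells, mem_diagOf, card_betaL]
  constructor
  · rintro ⟨b, hb, hrk, hlt⟩
    rw [mem_betaL] at hb
    obtain ⟨i', hi', rfl⟩ := hb
    rw [rk_betaL hi'] at hrk
    subst hrk
    rw [YoungDiagram.mem_iff_lt_rowLen]
    omega
  · intro hmem
    have hi : i < L := by
      have : (i, 0) ∈ lam := lam.up_left_mem (le_refl i) (Nat.zero_le j) hmem
      rw [YoungDiagram.mem_iff_lt_colLen] at this
      omega
    refine ⟨lam.rowLen i + (L - 1 - i), mem_betaL.mpr ⟨i, hi, rfl⟩, rk_betaL hi, ?_⟩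
    rw [YoungDiagram.mem_iff_lt_rowLen] at hmem
    omega

lemma betaL_diagOf {S : Finset ℕ} {L : ℕ} (h : S.card = L) :
    betaL L (diagOf S) = S := by
  apply Finset.eq_of_subset_of_card_le
  · intro x hx
    rw [mem_betaL] at hx
    obtain ⟨i, hi, rfl⟩ := hx
    obtain ⟨b, hb, hrk⟩ := exists_rk_eq (S := S) (i := i) (by omega)
    have hrow : (diagOf S).rowLen i = b - (S.card - 1 - i) := by
      rw [← hrk, rowLen_diagOf hb, hrk]
    have hle : S.card - 1 - i ≤ b := by
      have h1 := filter_lt_card hb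
      have h2 := card_filter_lt_le (S := S) b
      omega
    rw [hrow]
    have : b - (S.card - 1 - i) + (L - 1 - i) = b := by omega
    rw [this]
    exact hb
  · rw [card_betaL, h]

lemma colLen_diagOf_le (S : Finset ℕ) : (diagOf S).colLen 0 ≤ S.card := by
  by_contra hc
  have : (S.card, 0) ∈ diagOf S := YoungDiagram.mem_iff_lt_colLen.mpr (by omega)
  rw [mem_diagOf] at this
  obtain ⟨b, hb, hrk, -⟩ := this
  have := rk_lt_card hb
  omega

lemma betaL_pad {lam : YoungDiagram} {L k : ℕ} (h : lam.colLen 0 ≤ L) :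
    betaL (L + k) lam = ((betaL L lam).image (· + k)) ∪ Finset.range k := by
  ext b
  simp only [Finset.mem_union, Finset.mem_image, mem_betaL, Finset.mem_range]
  constructor
  · rintro ⟨i, hi, rfl⟩
    rcases Nat.lt_or_ge i L with h1 | h1
    · exact Or.inl ⟨lam.rowLen i + (L - 1 - i), ⟨i, h1, rfl⟩, by omega⟩
    · right
      rw [rowLen_eq_zero_of (by omega)]
      omega
  · rintro (⟨x, ⟨i, hi, rfl⟩, rfl⟩ | hb)
    · exact ⟨i, by omega, by omega⟩
    · refine ⟨L + k - 1 - b, by omega, ?_⟩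
      rw [rowLen_eq_zero_of (by omega)]
      omega



lemma adj_symm {x y : ℕ × ℕ} (h : Adj x y) : Adj y x := by
  rcases h with ⟨h1, h2⟩ | ⟨h1, h2⟩
  · exact Or.inl ⟨h1.symm, h2.symm⟩
  · exact Or.inr ⟨h1.symm, h2.symm⟩

lemma rtg_symm {S : Finset (ℕ × ℕ)} {x y : ℕ × ℕ}
    (h : Relation.ReflTransGen (fun a b => a ∈ S ∧ b ∈ S ∧ Adj a b) x y) :
    Relation.ReflTransGen (fun a b => a ∈ S ∧ b ∈ S ∧ Adj a b) y x := by
  induction h with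
  | refl => exact Relation.ReflTransGen.refl
  | tail h1 h2 ih =>
    exact Relation.ReflTransGen.head ⟨h2.2.1, h2.1, adj_symm h2.2.2⟩ ih

lemma colLen_le_of_subset {mu lam : YoungDiagram} (h : mu.cells ⊆ lam.cells) :
    mu.colLen 0 ≤ lam.colLen 0 := by
  by_contra hc
  have h1 : (lam.colLen 0, 0) ∈ mu := YoungDiagram.mem_iff_lt_colLen.mpr (by omega)
  have h2 := h h1
  rw [YoungDiagram.mem_cells, YoungDiagram.mem_iff_lt_colLen] at h2
  omega

lemma rowLen_le_of_subset {mu lam : YoungDiagram} (h : mu.cells ⊆ lam.cells) (i : ℕ) :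
    mu.rowLen i ≤ lam.rowLen i := by
  by_contra hc
  have h1 : (i, lam.rowLen i) ∈ mu := YoungDiagram.mem_iff_lt_rowLen.mpr (by omega)
  have h2 := h h1
  rw [YoungDiagram.mem_cells, YoungDiagram.mem_iff_lt_rowLen] at h2
  omega

section Dir1

variable {lam : YoungDiagram} {L k b : ℕ}

lemma exists_strip_of_move (hk : 0 < k) (hL : lam.colLen 0 ≤ L)
    (hb : b ∈ betaL L lam) (hkb : k ≤ b) (hnb : b - k ∉ betaL L lam) :
    ∃ mu : YoungDiagram, IsBorderStripOfSize k mu lam := by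
  classical
  obtain ⟨r, hrL, hfr⟩ := mem_betaL.mp hb
  set f : ℕ → ℕ := fun i => lam.rowLen i + (L - 1 - i) with hf
  set A : Finset ℕ := (Finset.range L).filter (fun i => b - k < f i) with hA
  have hrA : r ∈ A := by
    simp only [hA, Finset.mem_filter, Finset.mem_range]
    exact ⟨hrL, by simp only [hf]; omega⟩
  have hAne : A.Nonempty := ⟨r, hrA⟩
  set r' : ℕ := A.max' hAne with hr'
  have hr'A : r' ∈ A := A.max'_mem hAne
  have hr'L : r' < L := by
    have := hr'A; simp only [hA, Finset.mem_filter, Finset.mem_range] at this; exact this.1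
  have hfr' : b - k < f r' := by
    have := hr'A; simp only [hA, Finset.mem_filter, Finset.mem_range] at this; exact this.2
  have h1 : ∀ i, i ≤ r' → b - k < f i := by
    intro i hi
    rcases Nat.eq_or_lt_of_le hi with rfl | hi
    · exact hfr'
    · have h5 := betaF_strictAnti (lam := lam) (L := L) hi hr'L
      have h4 := hfr'
      simp only [hf] at h4 ⊢
      omega
  have h2 : ∀ i, r' < i → i < L → f i < b - k := by
    intro i hi hiL
    have hne : f i ≠ b - k := by
      intro hc
      exact hnb (mem_betaL.mpr ⟨i, hiL, hc⟩)
    have : ¬ (b - k < f i) := by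
      intro hc
      have : i ∈ A := by simp only [hA, Finset.mem_filter, Finset.mem_range]; exact ⟨hiL, hc⟩
      have := A.le_max' i this
      omega
    omega
  have h3 : r ≤ r' := A.le_max' r hrA
  have hpos : ∀ j, j ≤ r' → 0 < lam.rowLen j := by
    intro j hj
    by_contra hc
    have hrow0 : lam.rowLen j = 0 := by omega
    have hbkj : b - k < L - 1 - j := by
      have := h1 j hj; simp only [hf] at this; omega
    set i' : ℕ := L - 1 - (b - k) with hi'
    have hji' : j < i' := by omega
    have hi'L : i' < L := by omega
    have hrow0' : lam.rowLen i' = 0 := by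
      have := lam.rowLen_anti j i' (le_of_lt hji')
      omega
    apply hnb
    apply mem_betaL.mpr
    exact ⟨i', hi'L, by rw [hrow0']; omega⟩
  set m : ℕ → ℕ := fun i => if i < r' then lam.rowLen (i+1) - 1 else b - k - (L - 1 - r') with hm
  have hm_lt : ∀ i, r ≤ i → i ≤ r' → m i < lam.rowLen i := by
    intro i hri hir'
    rcases Nat.lt_or_ge i r' with hi | hi
    · have hp := hpos (i+1) (by omega)
      have := lam.rowLen_anti i (i+1) (by omega)
      simp only [hm, if_pos hi]
      omega
    · have hieq : i = r' := by omega
      have hp := hpos r' (le_refl _)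
      have hq := h1 r' (le_refl _)
      simp only [hf] at hq
      simp only [hm, hieq, if_neg (lt_irrefl r')]
      omega
  have hm_anti : ∀ i i', r ≤ i → i ≤ i' → i' ≤ r' → m i' ≤ m i := by
    intro i i' hri hii' hir'
    rcases Nat.eq_or_lt_of_le hii' with rfl | hlt
    · exact le_refl _
    rcases Nat.lt_or_ge i' r' with hi' | hi'
    · have := lam.rowLen_anti (i+1) (i'+1) (by omega)
      simp only [hm, if_pos hi', if_pos (by omega : i < r')]
      omega
    · have hieq : i' = r' := by omega
      have hlt2 := hm_lt r' (by omega) (le_refl _)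
      have := lam.rowLen_anti (i+1) r' (by omega)
      simp only [hm, hieq, if_pos (by omega : i < r'), if_neg (lt_irrefl r')] at *
      omega
  have hlam_le_m : ∀ i, r' < i → lam.rowLen i ≤ m r' := by
    intro i hi
    simp only [hm, if_neg (lt_irrefl r')]
    rcases Nat.lt_or_ge (r' + 1) L with hL1 | hL1
    · have := h2 (r'+1) (by omega) hL1
      simp only [hf] at this
      have := lam.rowLen_anti (r'+1) i (by omega)
      omega
    · have : lam.rowLen i = 0 := rowLen_eq_zero_of (by omega)
      omega
  have hck : L - 1 - r' ≤ b - k := by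
    rcases Nat.lt_or_ge (r' + 1) L with hL1 | hL1
    · have := h2 (r'+1) (by omega) hL1
      simp only [hf] at this
      omega
    · omega
  set T : Finset (ℕ × ℕ) :=
    (Finset.Icc r r').biUnion (fun i => (Finset.Ico (m i) (lam.rowLen i)).image (fun j => (i, j)))
    with hT
  have mem_T : ∀ i j, ((i, j) ∈ T ↔ (r ≤ i ∧ i ≤ r' ∧ m i ≤ j ∧ j < lam.rowLen i)) := by
    intro i j
    simp only [hT, Finset.mem_biUnion, Finset.mem_Icc, Finset.mem_image, Finset.mem_Ico]
    constructor
    · rintro ⟨a, ⟨h1, h2⟩, j', ⟨h3, h4⟩, h5⟩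
      have : a = i ∧ j' = j := ⟨congrArg Prod.fst h5, congrArg Prod.snd h5⟩
      obtain ⟨rfl, rfl⟩ := this
      exact ⟨h1, h2, h3, h4⟩
    · rintro ⟨h1, h2, h3, h4⟩
      exact ⟨i, ⟨h1, h2⟩, j, ⟨h3, h4⟩, rfl⟩
  have hT_sub : T ⊆ lam.cells := by
    intro x hx
    obtain ⟨i, j⟩ := x
    rw [mem_T] at hx
    exact (YoungDiagram.mem_cells _).mpr (YoungDiagram.mem_iff_lt_rowLen.mpr hx.2.2.2)
  -- the lower diagram
  have hlow : IsLowerSet (↑(lam.cells \ T) : Set (ℕ × ℕ)) := by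
    rintro ⟨i, j⟩ ⟨i', j'⟩ ⟨(hle1 : i' ≤ i), (hle2 : j' ≤ j)⟩ hmem
    simp only [Finset.coe_sdiff, Set.mem_diff, Finset.mem_coe] at hmem ⊢
    obtain ⟨hmem1, hmem2⟩ := hmem
    constructor
    · exact lam.up_left_mem hle1 hle2 hmem1
    · intro hT'
      rw [mem_T] at hT'
      obtain ⟨ha, hb', hc, hd⟩ := hT'
      rw [YoungDiagram.mem_cells, YoungDiagram.mem_iff_lt_rowLen] at hmem1
      apply hmem2
      rcases Nat.lt_or_ge r' i with hcase | hcase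
      · -- i > r' : contradiction
        have := hlam_le_m i hcase
        have := hm_anti i' r' ha (by omega) (le_refl _)
        omega
      · rw [mem_T]
        have := hm_anti i' i ha (by omega) hcase
        exact ⟨by omega, hcase, by omega, hmem1⟩
  set mu : YoungDiagram := ⟨lam.cells \ T, hlow⟩ with hmu
  have hdiff : lam.cells \ mu.cells = T := by
    simp only [hmu]
    exact Finset.sdiff_sdiff_eq_self hT_sub
  -- card T = k
  have hcardrow : ∀ i, ((Finset.Ico (m i) (lam.rowLen i)).image (fun j => (i, j))).card
      = lam.rowLen i - m i := by
    intro i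
    rw [Finset.card_image_of_injective _ (fun a b h => by simpa using h), Nat.card_Ico]
  have hTcard : T.card = k := by
    have hdisj : ∀ i1 ∈ Finset.Icc r r', ∀ i2 ∈ Finset.Icc r r', i1 ≠ i2 →
        Disjoint ((Finset.Ico (m i1) (lam.rowLen i1)).image (fun j => (i1, j)))
          ((Finset.Ico (m i2) (lam.rowLen i2)).image (fun j => (i2, j))) := by
      intro i1 _ i2 _ hne
      rw [Finset.disjoint_left]
      rintro ⟨a, c⟩ hx1 hx2
      simp only [Finset.mem_image] at hx1 hx2
      obtain ⟨j1, -, he1⟩ := hx1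
      obtain ⟨j2, -, he2⟩ := hx2
      have e1 := congrArg Prod.fst he1
      have e2 := congrArg Prod.fst he2
      simp at e1 e2
      exact hne (e1.trans e2.symm)
    rw [hT, Finset.card_biUnion hdisj]
    have hteles : ∀ d, d ≤ r' - r →
        ∑ i ∈ Finset.Icc (r' - d) r', (lam.rowLen i - m i) = f (r' - d) - (b - k) := by
      intro d
      induction d with
      | zero =>
        intro _
        simp only [Nat.sub_zero, Finset.Icc_self, Finset.sum_singleton]
        have := h1 r' (le_refl _)
        have := hpos r' (le_refl _)
        simp only [hm, hf, if_neg (lt_irrefl r')] at *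
        omega
      | succ d ih =>
        intro hd
        set a := r' - (d + 1) with ha
        have haa : a < r' := by omega
        have hra : r ≤ a := by omega
        have hsplit : Finset.Icc a r' = insert a (Finset.Icc (a+1) r') := by
          ext x
          simp only [Finset.mem_Icc, Finset.mem_insert]
          omega
        have hnotmem : a ∉ Finset.Icc (a+1) r' := by simp
        rw [hsplit, Finset.sum_insert hnotmem]
        have hprev : Finset.Icc (a+1) r' = Finset.Icc (r' - d) r' := by
          congr 1
          omega
        rw [hprev, ih (by omega)]
        have hfa1 : r' - d = a + 1 := by omega
        rw [hfa1]
        have hp := hpos (a+1) (by omega)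
        have hanti := lam.rowLen_anti a (a+1) (by omega)
        have hb1 := h1 (a+1) (by omega)
        simp only [hm, hf, if_pos haa] at *
        omega
    have hX := hteles (r' - r) (le_refl _)
    have hrr : r' - (r' - r) = r := by omega
    rw [hrr] at hX
    rw [Finset.sum_congr rfl (fun i _ => hcardrow i), hX]
    simp only [hf] at hfr ⊢
    omega
  -- connectivity
  set rel : ℕ × ℕ → ℕ × ℕ → Prop := fun a b => a ∈ T ∧ b ∈ T ∧ Adj a b with hrel
  have hrowpathd : ∀ d i j1, (i, j1) ∈ T → (i, j1 + d) ∈ T →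
      Relation.ReflTransGen rel (i, j1) (i, j1 + d) := by
    intro d
    induction d with
    | zero => intro i j1 _ _; exact Relation.ReflTransGen.refl
    | succ d ih =>
      intro i j1 hm1 hm2
      have hmem : (i, j1 + 1) ∈ T := by
        rw [mem_T] at hm1 hm2 ⊢
        refine ⟨hm1.1, hm1.2.1, by omega, by omega⟩
      have hstep : rel (i, j1) (i, j1 + 1) := by
        refine ⟨hm1, hmem, Or.inl ⟨rfl, Or.inr rfl⟩⟩
      have : j1 + (d + 1) = (j1 + 1) + d := by omega
      rw [this] at hm2 ⊢
      exact Relation.ReflTransGen.head hstep (ih i (j1 + 1) hmem hm2)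
  have hrowpath : ∀ i j1 j2, j1 ≤ j2 → (i, j1) ∈ T → (i, j2) ∈ T →
      Relation.ReflTransGen rel (i, j1) (i, j2) := by
    intro i j1 j2 hle hm1 hm2
    have : j2 = j1 + (j2 - j1) := by omega
    rw [this] at hm2 ⊢
    exact hrowpathd (j2 - j1) i j1 hm1 hm2
  have htobased : ∀ d i j, (i, j) ∈ T → r' - i ≤ d →
      Relation.ReflTransGen rel (i, j) (r', m r') := by
    intro d
    induction d with
    | zero =>
      intro i j hij hd
      have hmem := hij
      rw [mem_T] at hmem
      obtain ⟨hri, hir', hmj, hjl⟩ := hmem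
      have hieq : i = r' := by omega
      subst hieq
      have hbase : (r', m r') ∈ T := by
        rw [mem_T]
        exact ⟨hri, hir', le_refl _, hm_lt r' hri hir'⟩
      exact rtg_symm (hrowpath r' (m r') j hmj hbase hij)
    | succ d ih =>
      intro i j hij hd
      have hmem := hij
      rw [mem_T] at hmem
      obtain ⟨hri, hir', hmj, hjl⟩ := hmem
      rcases Nat.eq_or_lt_of_le hir' with hieq | hiltr'
      · subst hieq
        have hbase : (r', m r') ∈ T := by
          rw [mem_T]
          exact ⟨hri, le_refl _, le_refl _, hm_lt r' hri (le_refl _)⟩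
        exact rtg_symm (hrowpath r' (m r') j hmj hbase hij)
      · have hmi : (i, m i) ∈ T := by
          rw [mem_T]
          exact ⟨hri, by omega, le_refl _, hm_lt i hri (by omega)⟩
        have hnext : (i + 1, m i) ∈ T := by
          rw [mem_T]
          have hp := hpos (i+1) (by omega)
          have hlt2 := hm_lt (i+1) (by omega) (by omega)
          have hma := hm_anti i (i+1) hri (by omega) (by omega)
          refine ⟨by omega, by omega, hma, ?_⟩
          simp only [hm, if_pos hiltr'] at *
          omega
        have hpath1 : Relation.ReflTransGen rel (i, j) (i, m i) :=
          rtg_symm (hrowpath i (m i) j hmj hmi hij)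
        have hstep : rel (i, m i) (i + 1, m i) :=
          ⟨hmi, hnext, Or.inr ⟨rfl, Or.inr rfl⟩⟩
        have hrest := ih (i+1) (m i) hnext (by omega)
        exact hpath1.trans (Relation.ReflTransGen.head hstep hrest)
  have htobase : ∀ i j, (i, j) ∈ T →
      Relation.ReflTransGen rel (i, j) (r', m r') := fun i j hij =>
    htobased (r' - i) i j hij (le_refl _)
  have hconn : ConnectedCells T := by
    intro x hx y hy
    obtain ⟨i, j⟩ := x
    obtain ⟨i', j'⟩ := y
    exact (htobase i j hx).trans (rtg_symm (htobase i' j' hy))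
  have hno22 : NoTwoByTwo T := by
    rintro ⟨i, j, h00, h10, h01, h11⟩
    rw [mem_T] at h00 h10 h11
    have : i < r' := by omega
    have hm00 : m i = lam.rowLen (i+1) - 1 := by simp only [hm, if_pos this]
    have := hpos (i+1) (by omega)
    omega
  refine ⟨mu, ?_, ?_, ?_, ?_⟩
  · simp only [hmu]; exact Finset.sdiff_subset
  · rw [hdiff]; exact hTcard
  · rw [hdiff]; exact hconn
  · rw [hdiff]; exact hno22

end Dir1


section Dir2

variable {mu lam : YoungDiagram} {k L : ℕ}

lemma move_of_strip (hk : 0 < k) (hL : lam.colLen 0 ≤ L)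
    (hs : IsBorderStripOfSize k mu lam) :
    ∃ b ∈ betaL L lam, k ≤ b ∧ b - k ∉ betaL L lam ∧
      betaL L mu = insert (b - k) ((betaL L lam).erase b) := by
  classical
  obtain ⟨hsub, hcard, hconn, hno22⟩ := hs
  set S : Finset (ℕ × ℕ) := lam.cells \ mu.cells with hS
  have hrows : ∀ i j, ((i, j) ∈ S ↔ (mu.rowLen i ≤ j ∧ j < lam.rowLen i)) := by
    intro i j
    simp only [hS, Finset.mem_sdiff, ← YoungDiagram.mem_cells]
    rw [YoungDiagram.mem_cells, YoungDiagram.mem_cells,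
      YoungDiagram.mem_iff_lt_rowLen, YoungDiagram.mem_iff_lt_rowLen]
    omega
  have hml : ∀ i, mu.rowLen i ≤ lam.rowLen i := rowLen_le_of_subset hsub
  have hSne : S.Nonempty := by
    rw [← Finset.card_pos, hcard]; exact hk
  set R : Finset ℕ := S.image Prod.fst with hR
  have hRne : R.Nonempty := hSne.image _
  set r : ℕ := R.min' hRne with hr
  set r' : ℕ := R.max' hRne with hr'
  have hmemR : ∀ i, i ∈ R ↔ ∃ j, (i, j) ∈ S := by
    intro i
    simp only [hR, Finset.mem_image]
    constructor
    · rintro ⟨⟨a, c⟩, hac, rfl⟩; exact ⟨c, hac⟩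
    · rintro ⟨j, hj⟩; exact ⟨(i, j), hj, rfl⟩
  obtain ⟨jr, hjr⟩ := (hmemR r).mp (R.min'_mem hRne)
  obtain ⟨jr', hjr'⟩ := (hmemR r').mp (R.max'_mem hRne)
  have hrr' : r ≤ r' := R.min'_le r' (R.max'_mem hRne)
  have hbound : ∀ i j, (i, j) ∈ S → r ≤ i ∧ i ≤ r' := by
    intro i j hij
    have : i ∈ R := (hmemR i).mpr ⟨j, hij⟩
    exact ⟨R.min'_le i this, R.le_max' i this⟩
  -- crossing lemma
  have hcross : ∀ x y : ℕ × ℕ,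
      Relation.ReflTransGen (fun a b => a ∈ S ∧ b ∈ S ∧ Adj a b) x y →
      ∀ a, x.1 ≤ a → a + 1 ≤ y.1 → ∃ j, (a, j) ∈ S ∧ (a + 1, j) ∈ S := by
    intro x y hxy
    induction hxy with
    | refl => intro a h1 h2; omega
    | @tail w y' h1 h2 ih =>
      intro a ha1 ha2
      rcases Nat.lt_or_ge a w.1 with hcase | hcase
      · exact ih a ha1 (by omega)
      rcases Nat.lt_or_ge w.1 (a + 1) with hcase2 | hcase2
      · obtain ⟨hcS, hy'S, hadj⟩ := h2
        rcases hadj with ⟨he1, -⟩ | ⟨he1, he2⟩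
        · omega
        · have hy1 : y'.1 = w.1 + 1 := by omega
          have hca : w.1 = a := by omega
          refine ⟨w.2, ?_, ?_⟩
          · rw [← hca]
            have hww : (w.1, w.2) = w := rfl
            rw [hww]; exact hcS
          · have hyy : (a + 1, w.2) = y' := by
              rw [Prod.ext_iff]
              exact ⟨by omega, he1⟩
            rw [hyy]; exact hy'S
      · exact ih a ha1 (by omega)
  have hcross' : ∀ a, r ≤ a → a < r' → ∃ j, (a, j) ∈ S ∧ (a + 1, j) ∈ S := by
    intro a h1 h2
    exact hcross (r, jr) (r', jr') (hconn _ hjr _ hjr') a h1 (by omega)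
  have hstep : ∀ a, r ≤ a → a < r' →
      mu.rowLen a = lam.rowLen (a+1) - 1 ∧ 0 < lam.rowLen (a+1) := by
    intro a h1 h2
    obtain ⟨j, hj1, hj2⟩ := hcross' a h1 h2
    rw [hrows] at hj1 hj2
    have hpos : 0 < lam.rowLen (a+1) := by omega
    have hle : mu.rowLen a ≤ lam.rowLen (a+1) - 1 := by omega
    have hge : lam.rowLen (a+1) - 1 ≤ mu.rowLen a := by
      by_contra hc
      apply hno22
      refine ⟨a, mu.rowLen a, ?_, ?_, ?_, ?_⟩ <;> rw [hrows]
      · have := lam.rowLen_anti a (a+1) (by omega)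
        omega
      · have := mu.rowLen_anti a (a+1) (by omega)
        omega
      · have := lam.rowLen_anti a (a+1) (by omega)
        omega
      · have := mu.rowLen_anti a (a+1) (by omega)
        omega
    exact ⟨by omega, hpos⟩
  have hout : ∀ i, i < r ∨ r' < i → mu.rowLen i = lam.rowLen i := by
    intro i hi
    by_contra hc
    have h1 : mu.rowLen i < lam.rowLen i := by have := hml i; omega
    have h2 : (i, mu.rowLen i) ∈ S := (hrows _ _).mpr ⟨le_refl _, h1⟩
    have := hbound _ _ h2
    omega
  have hrowr'pos : mu.rowLen r' < lam.rowLen r' := by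
    rw [hrows] at hjr'; omega
  have hr'clen : r' < lam.colLen 0 := by
    apply lt_colLen_of_rowLen_pos
    omega
  have hr'L : r' < L := by omega
  have hrL : r < L := by omega
  set b : ℕ := lam.rowLen r + (L - 1 - r) with hbdef
  set c : ℕ := mu.rowLen r' + (L - 1 - r') with hcdef
  have hbmem : b ∈ betaL L lam := mem_betaL.mpr ⟨r, hrL, rfl⟩
  -- S as a disjoint union of row segments
  have hSrows : S = (Finset.Icc r r').biUnion
      (fun i => (Finset.Ico (mu.rowLen i) (lam.rowLen i)).image (fun j => (i, j))) := by
    ext ⟨i, j⟩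
    simp only [Finset.mem_biUnion, Finset.mem_Icc, Finset.mem_image, Finset.mem_Ico]
    constructor
    · intro hij
      have hb := hbound _ _ hij
      rw [hrows] at hij
      exact ⟨i, ⟨hb.1, hb.2⟩, j, ⟨hij.1, hij.2⟩, rfl⟩
    · rintro ⟨a, ⟨ha1, ha2⟩, j', ⟨h5, h6⟩, h7⟩
      obtain ⟨rfl, rfl⟩ : a = i ∧ j' = j := ⟨congrArg Prod.fst h7, congrArg Prod.snd h7⟩
      exact (hrows _ _).mpr ⟨h5, h6⟩
  have hkval : k = b - c ∧ c ≤ b := by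
    have hdisj : ∀ i1 ∈ Finset.Icc r r', ∀ i2 ∈ Finset.Icc r r', i1 ≠ i2 →
        Disjoint ((Finset.Ico (mu.rowLen i1) (lam.rowLen i1)).image (fun j => (i1, j)))
          ((Finset.Ico (mu.rowLen i2) (lam.rowLen i2)).image (fun j => (i2, j))) := by
      intro i1 _ i2 _ hne
      rw [Finset.disjoint_left]
      rintro ⟨a, e⟩ hx1 hx2
      simp only [Finset.mem_image] at hx1 hx2
      obtain ⟨j1, -, he1⟩ := hx1
      obtain ⟨j2, -, he2⟩ := hx2
      have e1 := congrArg Prod.fst he1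
      have e2 := congrArg Prod.fst he2
      simp at e1 e2
      exact hne (e1.trans e2.symm)
    have hcards : k = ∑ i ∈ Finset.Icc r r', (lam.rowLen i - mu.rowLen i) := by
      rw [← hcard, hSrows, Finset.card_biUnion hdisj]
      apply Finset.sum_congr rfl
      intro i _
      rw [Finset.card_image_of_injective _ (fun a b h => by simpa using h), Nat.card_Ico]
    have hteles : ∀ d, d ≤ r' - r →
        ∑ i ∈ Finset.Icc (r' - d) r', (lam.rowLen i - mu.rowLen i)
          = (lam.rowLen (r' - d) + (L - 1 - (r' - d))) - c := by
      intro d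
      induction d with
      | zero =>
        intro _
        simp only [Nat.sub_zero, Finset.Icc_self, Finset.sum_singleton, hcdef]
        have := hml r'
        omega
      | succ d ih =>
        intro hd
        set a := r' - (d + 1) with hadef
        have haa : a < r' := by omega
        have hra : r ≤ a := by omega
        have hsplit : Finset.Icc a r' = insert a (Finset.Icc (a+1) r') := by
          ext x
          simp only [Finset.mem_Icc, Finset.mem_insert]
          omega
        rw [hsplit, Finset.sum_insert (by simp)]
        have hprev : Finset.Icc (a+1) r' = Finset.Icc (r' - d) r' := by
          congr 1
          omega
        rw [hprev, ih (by omega)]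
        have hfa1 : r' - d = a + 1 := by omega
        rw [hfa1]
        obtain ⟨hmu_a, hpos_a1⟩ := hstep a hra haa
        have hanti := lam.rowLen_anti a (a+1) (by omega)
        have hcle : c ≤ lam.rowLen (a+1) + (L - 1 - (a+1)) := by
          have h1 := mu.rowLen_anti (a+1) r' (by omega)
          have h2 := hml (a+1)
          simp only [hcdef]
          omega
        omega
    have hX := hteles (r' - r) (le_refl _)
    have hrr : r' - (r' - r) = r := by omega
    rw [hrr] at hX
    rw [hX] at hcards
    have hcb : c < b := by
      simp only [hbdef, hcdef]
      have h1 := mu.rowLen_anti r r' hrr'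
      have h2 := hml r
      -- mu.rowLen r' ≤ mu.rowLen r ≤ lam.rowLen r; and strict since k > 0
      omega
    exact ⟨hcards, le_of_lt hcb⟩
  have hkb : k ≤ b := by omega
  have hcbk : c = b - k := by omega
  have hcnot : b - k ∉ betaL L lam := by
    rw [← hcbk]
    rw [mem_betaL]
    rintro ⟨i, hiL, hfi⟩
    rcases Nat.lt_or_ge r' i with hcase | hcase
    · -- i > r' : f i < c
      have h2 := hout (r'+1) (by omega)
      have h3 := lam.rowLen_anti (r'+1) i (by omega)
      have h4 := mu.rowLen_anti r' (r'+1) (by omega)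
      simp only [hcdef] at hfi
      omega
    · -- i ≤ r' : f i ≥ f r' > c
      have h1 : lam.rowLen r' + (L - 1 - r') ≤ lam.rowLen i + (L - 1 - i) := by
        rcases Nat.eq_or_lt_of_le hcase with rfl | hlt
        · omega
        · have := betaF_strictAnti (lam := lam) (L := L) hlt hr'L
          omega
      simp only [hcdef] at hfi
      omega
  refine ⟨b, hbmem, hkb, hcnot, ?_⟩
  rw [← hcbk]
  have hbetaF_inj : ∀ i j, i < L → j < L →
      lam.rowLen i + (L - 1 - i) = lam.rowLen j + (L - 1 - j) → i = j := by
    intro i j hi hj h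
    rcases Nat.lt_trichotomy i j with h1 | h1 | h1
    · have := betaF_strictAnti (lam := lam) h1 hj; omega
    · exact h1
    · have := betaF_strictAnti (lam := lam) h1 hi; omega
  apply Finset.eq_of_subset_of_card_le
  · intro x hx
    rw [mem_betaL] at hx
    obtain ⟨i, hiL, rfl⟩ := hx
    rcases Nat.lt_or_ge i r with hir | hir
    · -- below the strip
      rw [Finset.mem_insert, Finset.mem_erase]
      right
      constructor
      · intro hc
        have := hbetaF_inj i r hiL hrL (by rw [hout i (Or.inl hir)] at hc; exact hc)
        omega
      · rw [hout i (Or.inl hir)]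
        exact mem_betaL.mpr ⟨i, hiL, rfl⟩
    rcases Nat.lt_or_ge i r' with hir' | hir'
    · -- middle rows
      obtain ⟨hmu_i, hpos_i1⟩ := hstep i hir hir'
      have hgi : mu.rowLen i + (L - 1 - i) = lam.rowLen (i+1) + (L - 1 - (i+1)) := by
        rw [hmu_i]
        omega
      rw [Finset.mem_insert, Finset.mem_erase, hgi]
      right
      constructor
      · intro hc
        have := hbetaF_inj (i+1) r (by omega) hrL hc
        omega
      · exact mem_betaL.mpr ⟨i+1, by omega, rfl⟩
    rcases Nat.eq_or_lt_of_le hir' with hieq | hig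
    · -- i = r'
      rw [Finset.mem_insert]
      left
      rw [← hieq, ← hcdef, hcbk]
    · -- above the strip
      rw [Finset.mem_insert, Finset.mem_erase]
      right
      constructor
      · intro hc
        have := hbetaF_inj i r hiL hrL (by rw [hout i (Or.inr hig)] at hc; exact hc)
        omega
      · rw [hout i (Or.inr hig)]
        exact mem_betaL.mpr ⟨i, hiL, rfl⟩
  · have hcnot' : c ∉ betaL L lam := by rw [hcbk]; exact hcnot
    have h1 : c ∉ (betaL L lam).erase b := fun hc => hcnot' (Finset.mem_of_mem_erase hc)
    rw [Finset.card_insert_of_notMem h1, Finset.card_erase_of_mem hbmem,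
      card_betaL, card_betaL]
    omega

end Dir2



lemma betaSet_eq_betaL (k : ℕ) (lam : YoungDiagram) :
    betaSet k lam = betaL (numRowsPad k lam) lam := rfl

section Bal

variable {k : ℕ} {lam mu : YoungDiagram}

lemma colLen_le_numRowsPad (hk : 0 < k) (lam : YoungDiagram) :
    lam.colLen 0 ≤ numRowsPad k lam := by
  rw [numRowsPad]
  set c := lam.colLen 0
  have h1 := Nat.div_add_mod (c + k - 1) k
  have h2 := Nat.mod_lt (c + k - 1) hk
  omega

lemma dvd_numRowsPad (k : ℕ) (lam : YoungDiagram) : k ∣ numRowsPad k lam :=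
  Dvd.intro _ rfl

lemma numRowsPad_le {L : ℕ} (hk : 0 < k) (hdvd : k ∣ L) (hc : lam.colLen 0 ≤ L) :
    numRowsPad k lam ≤ L := by
  obtain ⟨q, rfl⟩ := hdvd
  rw [numRowsPad]
  apply Nat.mul_le_mul_left
  rw [Nat.div_le_iff_le_mul_add_pred hk]
  have : lam.colLen 0 ≤ k * q := hc
  omega

noncomputable def resCount (k s L : ℕ) (lam : YoungDiagram) : ℕ :=
  ((betaL L lam).filter (fun b => b % k = s)).card

lemma resCount_pad (hk : 0 < k) {L s : ℕ} (hL : lam.colLen 0 ≤ L) (hs : s < k) :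
    resCount k s (L + k) lam = resCount k s L lam + 1 := by
  rw [resCount, resCount, betaL_pad hL, Finset.filter_union]
  have h1 : (((betaL L lam).image (· + k)).filter (fun b => b % k = s)) =
      ((betaL L lam).filter (fun b => b % k = s)).image (· + k) := by
    ext x
    simp only [Finset.mem_filter, Finset.mem_image]
    constructor
    · rintro ⟨⟨y, hy, rfl⟩, hmod⟩
      exact ⟨y, ⟨hy, by rwa [Nat.add_mod_right] at hmod⟩, rfl⟩
    · rintro ⟨y, ⟨hy, hmod⟩, rfl⟩
      exact ⟨⟨y, hy, rfl⟩, by rwa [Nat.add_mod_right]⟩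
  have h2 : ((Finset.range k).filter (fun b => b % k = s)) = {s} := by
    ext x
    simp only [Finset.mem_filter, Finset.mem_range, Finset.mem_singleton]
    constructor
    · rintro ⟨hxk, hmod⟩
      rwa [Nat.mod_eq_of_lt hxk] at hmod
    · rintro rfl
      exact ⟨hs, Nat.mod_eq_of_lt hs⟩
  rw [h1, h2, Finset.card_union_of_disjoint, Finset.card_singleton,
    Finset.card_image_of_injective _ (fun a b h => by omega)]
  rw [Finset.disjoint_singleton_right, Finset.mem_image]
  rintro ⟨y, hy, hyk⟩
  omega

def Bal (k : ℕ) (lam : YoungDiagram) : Prop :=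
  ∀ s < k, k * resCount k s (numRowsPad k lam) lam = numRowsPad k lam

lemma bal_aux (hk : 0 < k) : ∀ (j L : ℕ), lam.colLen 0 ≤ L →
    ((∀ s < k, k * resCount k s (L + j * k) lam = L + j * k) ↔
      (∀ s < k, k * resCount k s L lam = L)) := by
  intro j
  induction j with
  | zero => intro L _; simp
  | succ j ih =>
    intro L hL
    have hstepL : ∀ s < k, (k * resCount k s (L + k) lam = L + k ↔
        k * resCount k s L lam = L) := by
      intro s hs
      rw [resCount_pad hk hL hs, Nat.mul_add, Nat.mul_one]
      omega
    have heq : L + (j + 1) * k = (L + k) + j * k := by ring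
    rw [heq, ih (L + k) (by omega)]
    exact ⟨fun h s hs => (hstepL s hs).mp (h s hs), fun h s hs => (hstepL s hs).mpr (h s hs)⟩

lemma bal_iff {L : ℕ} (hk : 0 < k) (hdvd : k ∣ L) (hcl : lam.colLen 0 ≤ L) :
    Bal k lam ↔ ∀ s < k, k * resCount k s L lam = L := by
  have hple : numRowsPad k lam ≤ L := numRowsPad_le hk hdvd hcl
  have hdvd2 : k ∣ L - numRowsPad k lam := Nat.dvd_sub hdvd (dvd_numRowsPad k lam)
  obtain ⟨j, hj⟩ := hdvd2
  have hLeq : L = numRowsPad k lam + j * k := by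
    have := Nat.mul_comm k j
    omega
  rw [Bal]
  rw [← bal_aux (lam := lam) hk j (numRowsPad k lam) (colLen_le_numRowsPad hk lam), ← hLeq]

lemma resCount_move {L s b : ℕ} (hk : 0 < k) (hmove : betaL L mu = insert (b - k) ((betaL L lam).erase b))
    (hb : b ∈ betaL L lam) (hkb : k ≤ b) (hnb : b - k ∉ betaL L lam) :
    resCount k s L mu = resCount k s L lam := by
  rw [resCount, resCount, hmove, Finset.filter_insert, Finset.filter_erase]
  have hmod : (b - k) % k = b % k := by
    conv_rhs => rw [show b = (b - k) + k by omega]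
    rw [Nat.add_mod_right]
  by_cases hcase : b % k = s
  · rw [if_pos (by rw [hmod]; exact hcase)]
    have hbf : b ∈ (betaL L lam).filter (fun x => x % k = s) := Finset.mem_filter.mpr ⟨hb, hcase⟩
    have hnbf : b - k ∉ ((betaL L lam).filter (fun x => x % k = s)).erase b := by
      intro hc
      exact hnb (Finset.filter_subset _ _ (Finset.mem_of_mem_erase hc))
    rw [Finset.card_insert_of_notMem hnbf, Finset.card_erase_of_mem hbf]
    have : 0 < ((betaL L lam).filter (fun x => x % k = s)).card := Finset.card_pos.mpr ⟨b, hbf⟩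
    omega
  · rw [if_neg (by rw [hmod]; exact hcase)]
    rw [Finset.erase_eq_of_notMem]
    intro hc
    exact hcase (Finset.mem_filter.mp hc).2

lemma bal_strip (hk : 0 < k) (hstrip : IsBorderStripOfSize k mu lam) :
    (Bal k mu ↔ Bal k lam) := by
  set L := numRowsPad k lam with hL
  have hclam : lam.colLen 0 ≤ L := colLen_le_numRowsPad hk lam
  have hcmu : mu.colLen 0 ≤ L := le_trans (colLen_le_of_subset hstrip.1) hclam
  obtain ⟨b, hb, hkb, hnb, hmove⟩ := move_of_strip hk hclam hstrip
  rw [bal_iff (L := L) hk (dvd_numRowsPad k lam) hcmu,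
    bal_iff (L := L) hk (dvd_numRowsPad k lam) hclam]
  have : ∀ s, resCount k s L mu = resCount k s L lam := fun s =>
    resCount_move hk hmove hb hkb hnb
  exact ⟨fun h s hs => by rw [← this s]; exact h s hs,
    fun h s hs => by rw [this s]; exact h s hs⟩

lemma colLen_bot : (⊥ : YoungDiagram).colLen 0 = 0 := by
  by_contra hc
  have : (0, 0) ∈ (⊥ : YoungDiagram) := YoungDiagram.mem_iff_lt_colLen.mpr (by omega)
  exact YoungDiagram.notMem_bot _ this

lemma numRowsPad_bot (hk : 0 < k) : numRowsPad k (⊥ : YoungDiagram) = 0 := by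
  rw [numRowsPad, colLen_bot]
  have : (0 + k - 1) / k = 0 := Nat.div_eq_of_lt (by omega)
  rw [this, Nat.mul_zero]

lemma bal_bot (hk : 0 < k) : Bal k (⊥ : YoungDiagram) := by
  intro s hs
  rw [numRowsPad_bot hk, resCount]
  have : betaL 0 (⊥ : YoungDiagram) = ∅ := by
    rw [betaL]
    simp
  rw [this]
  simp

lemma downward_range {D : Finset ℕ} (h : ∀ t, t + 1 ∈ D → t ∈ D) :
    ∀ x, x ∈ D ↔ x < D.card := by
  have hmono : ∀ d x, x ∈ D → x - d ∈ D := by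
    intro d
    induction d with
    | zero => intro x hx; simpa using hx
    | succ d ih =>
      intro x hx
      have hxd := ih x hx
      rcases Nat.eq_zero_or_pos (x - d) with h0 | hpos
      · have heq : x - (d + 1) = x - d := by omega
        rw [heq]
        exact hxd
      · apply h
        have heq : (x - (d+1)) + 1 = x - d := by omega
        rw [heq]
        exact hxd
  intro x
  constructor
  · intro hx
    have hsub : Finset.Iic x ⊆ D := by
      intro y hy
      simp only [Finset.mem_Iic] at hy
      have : x - (x - y) = y := by omega
      rw [← this]
      exact hmono (x - y) x hx
    have := Finset.card_le_card hsub
    rw [Nat.card_Iic] at this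
    omega
  · intro hx
    by_contra hnx
    have hsub : D ⊆ Finset.range x := by
      intro y hy
      simp only [Finset.mem_range]
      by_contra hc
      have : y - (y - x) = x := by omega
      exact hnx (this ▸ hmono (y - x) y hy)
    have := Finset.card_le_card hsub
    rw [Finset.card_range] at this
    omega

lemma terminal_bot (hk : 0 < k) (hbal : Bal k lam) (hnr : NoRemovableStrip k lam) :
    lam = ⊥ := by
  classical
  set L := numRowsPad k lam with hLdef
  have hclam : lam.colLen 0 ≤ L := colLen_le_numRowsPad hk lam
  set B := betaL L lam with hB
  have hnomove : ∀ b ∈ B, k ≤ b → b - k ∈ B := by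
    intro b hb hkb
    by_contra hc
    exact hnr (exists_strip_of_move hk hclam hb hkb hc)
  have hBrange : B = Finset.range L := by
    have hsub : Finset.range L ⊆ B := ?_
    · exact (Finset.eq_of_subset_of_card_le hsub
        (by rw [hB, card_betaL, Finset.card_range])).symm
    intro x hxL
    rw [Finset.mem_range] at hxL
    set s := x % k with hs
    set Ts : Finset ℕ := (B.filter (fun b => b % k = s)).image (· / k) with hTs
    have hskl : s < k := Nat.mod_lt x hk
    have hTscard : k * Ts.card = L := by
      have hinj : Set.InjOn (· / k) ↑(B.filter (fun b => b % k = s)) := by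
        intro a ha b hb h
        simp only [Finset.coe_filter, Set.mem_setOf_eq] at ha hb
        dsimp only at h
        have h1 := Nat.div_add_mod a k
        have h2 := Nat.div_add_mod b k
        have : k * (a / k) = k * (b / k) := by rw [h]
        omega
      rw [hTs, Finset.card_image_of_injOn hinj]
      exact hbal s hskl
    have hdown : ∀ t, t + 1 ∈ Ts → t ∈ Ts := by
      intro t ht
      simp only [hTs, Finset.mem_image, Finset.mem_filter] at ht ⊢
      obtain ⟨b, ⟨hbB, hbmod⟩, hbdiv⟩ := ht
      have hmul : k * (t + 1) = k * t + k := by ring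
      have hbeq : b = k * (t + 1) + s := by
        have hdm := Nat.div_add_mod b k
        rw [hbdiv, hbmod] at hdm
        omega
      have hbk : k ≤ b := by omega
      refine ⟨b - k, ⟨hnomove b hbB hbk, ?_⟩, ?_⟩
      · have heq : b - k = k * t + s := by omega
        rw [heq, Nat.mul_add_mod, Nat.mod_eq_of_lt hskl]
      · have heq : b - k = k * t + s := by omega
        rw [heq, Nat.mul_add_div hk, Nat.div_eq_of_lt hskl]
        omega
    have hmemTs := downward_range hdown
    have htx : x / k ∈ Ts := by
      rw [hmemTs]
      have h1 : k * (x / k) < k * Ts.card := by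
        have := Nat.div_add_mod x k
        omega
      exact Nat.lt_of_mul_lt_mul_left h1
    simp only [hTs, Finset.mem_image, Finset.mem_filter] at htx
    obtain ⟨b, ⟨hbB, hbmod⟩, hbdiv⟩ := htx
    have hbx : b = x := by
      have h1 := Nat.div_add_mod b k
      have h2 := Nat.div_add_mod x k
      rw [hbdiv, hbmod] at h1
      omega
    rwa [← hbx]
  have hrow0 : lam.rowLen 0 = 0 := by
    rcases Nat.eq_zero_or_pos L with hL0 | hLpos
    · by_contra hc
      have := lt_colLen_of_rowLen_pos (lam := lam) (i := 0) (by omega)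
      omega
    · have hb0 : lam.rowLen 0 + (L - 1 - 0) ∈ B := mem_betaL.mpr ⟨0, hLpos, rfl⟩
      rw [hBrange, Finset.mem_range] at hb0
      omega
  ext ⟨i, j⟩
  simp only [YoungDiagram.mem_cells, YoungDiagram.notMem_bot, iff_false]
  intro hmem
  have : (0, j) ∈ lam := lam.up_left_mem (Nat.zero_le i) (le_refl j) hmem
  rw [YoungDiagram.mem_iff_lt_rowLen, hrow0] at this
  omega

lemma card_eq_of_strip (hstrip : IsBorderStripOfSize k mu lam) :
    mu.card + k = lam.card := by
  obtain ⟨hsub, hcard, -, -⟩ := hstrip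
  have h1 : (lam.cells \ mu.cells).card = lam.cells.card - mu.cells.card :=
    Finset.card_sdiff_of_subset hsub
  have h2 : mu.cells.card ≤ lam.cells.card := Finset.card_le_card hsub
  rw [YoungDiagram.card, YoungDiagram.card]
  omega

lemma exists_terminal (hk : 0 < k) (lam : YoungDiagram) :
    ∃ mu, Relation.ReflTransGen (fun a b => IsBorderStripOfSize k b a) lam mu ∧
      NoRemovableStrip k mu := by
  classical
  generalize hn : lam.card = n
  induction n using Nat.strong_induction_on generalizing lam with
  | _ n ih =>
    by_cases hnr : NoRemovableStrip k lam
    · exact ⟨lam, Relation.ReflTransGen.refl, hnr⟩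
    · rw [NoRemovableStrip, not_not] at hnr
      obtain ⟨mu', hstrip⟩ := hnr
      have hcard := card_eq_of_strip hstrip
      obtain ⟨mu, hpath, hnr'⟩ := ih mu'.card (by omega) mu' rfl
      exact ⟨mu, Relation.ReflTransGen.head hstrip hpath, hnr'⟩

lemma bal_rtg (hk : 0 < k)
    (hpath : Relation.ReflTransGen (fun a b => IsBorderStripOfSize k b a) lam mu) :
    (Bal k mu ↔ Bal k lam) := by
  induction hpath with
  | refl => exact Iff.rfl
  | tail h1 h2 ih => rw [← ih]; exact bal_strip hk h2

lemma bal_of_emptyKCore (hk : 0 < k) (h : EmptyKCore k lam) : Bal k lam := by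
  obtain ⟨mu, hpath, hnr⟩ := exists_terminal hk lam
  have hbot := h mu hpath hnr
  rw [← bal_rtg hk hpath, hbot]
  exact bal_bot hk

lemma emptyKCore_of_bal (hk : 0 < k) (h : Bal k lam) : EmptyKCore k lam := by
  intro mu hpath hnr
  exact terminal_bot hk ((bal_rtg hk hpath).mpr h) hnr

end Bal



section Quot

variable {k : ℕ} {lam mu : YoungDiagram}

noncomputable def qsetL (k s L : ℕ) (lam : YoungDiagram) : Finset ℕ :=
  ((betaL L lam).filter (fun b => b % k = s)).image (· / k)

lemma kQuotientCells_eq (lam : YoungDiagram) (s : Fin k) :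
    kQuotientCells k lam s = cellsOfBetaSet (qsetL k (s : ℕ) (numRowsPad k lam) lam) := rfl

lemma divk_injOn (hk : 0 < k) {s : ℕ} (F : Finset ℕ) :
    Set.InjOn (· / k) ↑(F.filter (fun b => b % k = s)) := by
  intro a ha b hb h
  simp only [Finset.coe_filter, Set.mem_setOf_eq] at ha hb
  dsimp only at h
  have h1 := Nat.div_add_mod a k
  have h2 := Nat.div_add_mod b k
  have h3 : k * (a / k) = k * (b / k) := by rw [h]
  omega

lemma card_qsetL (hk : 0 < k) {s L : ℕ} : (qsetL k s L lam).card = resCount k s L lam := by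
  rw [qsetL, resCount, Finset.card_image_of_injOn (divk_injOn hk _)]

lemma cellsOfBetaSet_shift (T : Finset ℕ) :
    cellsOfBetaSet (insert 0 (T.image (· + 1))) = cellsOfBetaSet T := by
  classical
  set T' := insert 0 (T.image (· + 1)) with hT'
  have h0 : (0 : ℕ) ∉ T.image (· + 1) := by
    simp only [Finset.mem_image]
    rintro ⟨y, -, hy⟩
    omega
  have hcard : T'.card = T.card + 1 := by
    rw [hT', Finset.card_insert_of_notMem h0,
      Finset.card_image_of_injective _ (fun a b h => by omega)]
  have hrk0 : rk T' 0 = T.card := by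
    rw [rk]
    have : T'.filter (fun b' => 0 < b') = T.image (· + 1) := by
      ext x
      simp only [hT', Finset.mem_filter, Finset.mem_insert, Finset.mem_image]
      constructor
      · rintro ⟨rfl | ⟨y, hy, rfl⟩, hpos⟩
        · omega
        · exact ⟨y, hy, rfl⟩
      · rintro ⟨y, hy, rfl⟩
        exact ⟨Or.inr ⟨y, hy, rfl⟩, by omega⟩
    rw [this, Finset.card_image_of_injective _ (fun a b h => by omega)]
  have hrks : ∀ b, rk T' (b + 1) = rk T b := by
    intro b
    rw [rk, rk]
    have : T'.filter (fun b' => b + 1 < b') = (T.filter (fun b' => b < b')).image (· + 1) := by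
      ext x
      simp only [hT', Finset.mem_filter, Finset.mem_insert, Finset.mem_image]
      constructor
      · rintro ⟨rfl | ⟨y, hy, rfl⟩, hlt⟩
        · omega
        · exact ⟨y, ⟨hy, by omega⟩, rfl⟩
      · rintro ⟨y, ⟨hy, hlt⟩, rfl⟩
        exact ⟨Or.inr ⟨y, hy, rfl⟩, by omega⟩
    rw [this, Finset.card_image_of_injective _ (fun a b h => by omega)]
  ext ⟨i, j⟩
  rw [mem_cellsOfBetaSet, mem_cellsOfBetaSet]
  constructor
  · rintro ⟨b', hb', hrk, hlt⟩
    rw [hT', Finset.mem_insert, Finset.mem_image] at hb'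
    rcases hb' with rfl | ⟨b, hb, rfl⟩
    · omega
    · rw [hrks] at hrk
      have hbc : rk T b < T.card := rk_lt_card hb
      refine ⟨b, hb, hrk, by omega⟩
  · rintro ⟨b, hb, hrk, hlt⟩
    have hbc : rk T b < T.card := rk_lt_card hb
    refine ⟨b + 1, ?_, by rw [hrks]; exact hrk, by omega⟩
    rw [hT', Finset.mem_insert, Finset.mem_image]
    exact Or.inr ⟨b, hb, rfl⟩

lemma qsetL_pad (hk : 0 < k) {L s : ℕ} (hL : lam.colLen 0 ≤ L) (hs : s < k) :
    qsetL k s (L + k) lam = insert 0 ((qsetL k s L lam).image (· + 1)) := by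
  rw [qsetL, qsetL, betaL_pad hL, Finset.filter_union]
  have h1 : (((betaL L lam).image (· + k)).filter (fun b => b % k = s)) =
      ((betaL L lam).filter (fun b => b % k = s)).image (· + k) := by
    ext x
    simp only [Finset.mem_filter, Finset.mem_image]
    constructor
    · rintro ⟨⟨y, hy, rfl⟩, hmod⟩
      exact ⟨y, ⟨hy, by rwa [Nat.add_mod_right] at hmod⟩, rfl⟩
    · rintro ⟨y, ⟨hy, hmod⟩, rfl⟩
      exact ⟨⟨y, hy, rfl⟩, by rwa [Nat.add_mod_right]⟩
  have h2 : ((Finset.range k).filter (fun b => b % k = s)) = {s} := by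
    ext x
    simp only [Finset.mem_filter, Finset.mem_range, Finset.mem_singleton]
    constructor
    · rintro ⟨hxk, hmod⟩
      rwa [Nat.mod_eq_of_lt hxk] at hmod
    · rintro rfl
      exact ⟨hs, Nat.mod_eq_of_lt hs⟩
  rw [h1, h2, Finset.image_union]
  have h3 : ({s} : Finset ℕ).image (· / k) = {0} := by
    rw [Finset.image_singleton]
    simp only [Finset.singleton_inj]
    exact Nat.div_eq_of_lt hs
  have h4 : (((betaL L lam).filter (fun b => b % k = s)).image (· + k)).image (· / k) =
      (((betaL L lam).filter (fun b => b % k = s)).image (· / k)).image (· + 1) := by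
    rw [Finset.image_image, Finset.image_image]
    apply Finset.image_congr
    intro x _
    simp only [Function.comp_apply]
    rw [Nat.add_div_right _ hk]
  rw [h3, h4, Finset.union_comm, Finset.insert_eq]

lemma quot_transfer_aux (hk : 0 < k) {s : ℕ} (hs : s < k) : ∀ j L, lam.colLen 0 ≤ L →
    cellsOfBetaSet (qsetL k s (L + j * k) lam) = cellsOfBetaSet (qsetL k s L lam) := by
  intro j
  induction j with
  | zero => intro L _; simp
  | succ j ih =>
    intro L hL
    have heq : L + (j + 1) * k = (L + k) + j * k := by ring
    rw [heq, ih (L + k) (by omega), qsetL_pad hk hL hs, cellsOfBetaSet_shift]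

lemma quot_transfer (hk : 0 < k) {L : ℕ} (hdvd : k ∣ L) (hcl : lam.colLen 0 ≤ L)
    (s : Fin k) :
    kQuotientCells k lam s = cellsOfBetaSet (qsetL k (s : ℕ) L lam) := by
  have hple : numRowsPad k lam ≤ L := numRowsPad_le hk hdvd hcl
  obtain ⟨j, hj⟩ := Nat.dvd_sub hdvd (dvd_numRowsPad k lam)
  have hLeq : L = numRowsPad k lam + j * k := by
    have := Nat.mul_comm k j
    omega
  rw [kQuotientCells_eq, hLeq,
    quot_transfer_aux hk s.isLt j (numRowsPad k lam) (colLen_le_numRowsPad hk lam)]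

end Quot


section CardSum

variable {k : ℕ} {lam : YoungDiagram}

lemma gauss_add (a : ℕ) : ∀ b, ∑ i ∈ Finset.range (a + b), i
    = (∑ i ∈ Finset.range a, i) + a * b + ∑ i ∈ Finset.range b, i := by
  intro b
  induction b with
  | zero => simp
  | succ b ih =>
    have h1 : a + (b + 1) = (a + b) + 1 := by omega
    rw [h1, Finset.sum_range_succ, Finset.sum_range_succ, ih]
    have h2 : a * (b + 1) = a * b + a := by ring
    omega

lemma gauss_mul (k m : ℕ) : ∑ i ∈ Finset.range (k * m), i
    = k * k * (∑ i ∈ Finset.range m, i) + m * ∑ i ∈ Finset.range k, i := by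
  induction m with
  | zero => simp
  | succ m ih =>
    have h1 : k * (m + 1) = k * m + k := by ring
    rw [h1, gauss_add, ih, Finset.sum_range_succ]
    have h2 : k * m * k = k * k * m := by ring
    have h3 : k * k * ((∑ i ∈ Finset.range m, i) + m) =
        k * k * (∑ i ∈ Finset.range m, i) + k * k * m := by ring
    have h4 : (m + 1) * (∑ i ∈ Finset.range k, i) =
        m * (∑ i ∈ Finset.range k, i) + ∑ i ∈ Finset.range k, i := by ring
    omega

lemma card_quot_sum (hk : 0 < k) (hbal : Bal k lam) {L : ℕ} (hdvd : k ∣ L)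
    (hcl : lam.colLen 0 ≤ L) :
    lam.card = k * ∑ s ∈ Finset.range k, (cellsOfBetaSet (qsetL k s L lam)).card := by
  classical
  obtain ⟨m, hm⟩ := hdvd
  have hbal' := (bal_iff hk ⟨m, hm⟩ hcl).mp hbal
  have hTcard : ∀ s, s < k → (qsetL k s L lam).card = m := by
    intro s hs
    have h1 := hbal' s hs
    have h2 : k * resCount k s L lam = k * m := by omega
    rw [card_qsetL hk]
    exact Nat.eq_of_mul_eq_mul_left hk h2
  have hA1 : ∀ s, s < k → (cellsOfBetaSet (qsetL k s L lam)).card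
      + (∑ i ∈ Finset.range m, i) = ∑ t ∈ qsetL k s L lam, t := by
    intro s hs
    have := card_cellsOfBetaSet (qsetL k s L lam)
    rwa [hTcard s hs] at this
  have hcellsB : cellsOfBetaSet (betaL L lam) = lam.cells := by
    have := diagOf_betaL (lam := lam) (L := L) hcl
    exact congrArg YoungDiagram.cells this
  have hA2 : lam.card + (∑ i ∈ Finset.range L, i) = ∑ b ∈ betaL L lam, b := by
    have := card_cellsOfBetaSet (betaL L lam)
    rwa [hcellsB, card_betaL] at this
  have hA3 : ∑ s ∈ Finset.range k, (∑ b ∈ (betaL L lam).filter (fun b => b % k = s), b)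
      = ∑ b ∈ betaL L lam, b :=
    Finset.sum_fiberwise_of_maps_to (fun b _ => Finset.mem_range.mpr (Nat.mod_lt b hk)) _
  have hA4 : ∀ s, s < k → ∑ b ∈ (betaL L lam).filter (fun b => b % k = s), b
      = k * (∑ t ∈ qsetL k s L lam, t) + s * m := by
    intro s hs
    have h1 : ∑ t ∈ qsetL k s L lam, (k * t + s)
        = ∑ b ∈ (betaL L lam).filter (fun b => b % k = s), (k * (b / k) + s) := by
      rw [qsetL]
      apply Finset.sum_image
      intro x hx y hy h
      exact divk_injOn hk _ (by simpa using hx) (by simpa using hy) h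
    have h2 : ∑ b ∈ (betaL L lam).filter (fun b => b % k = s), (k * (b / k) + s)
        = ∑ b ∈ (betaL L lam).filter (fun b => b % k = s), b := by
      apply Finset.sum_congr rfl
      intro b hb
      rw [Finset.mem_filter] at hb
      have := Nat.div_add_mod b k
      omega
    have h3 : ∑ t ∈ qsetL k s L lam, (k * t + s)
        = k * (∑ t ∈ qsetL k s L lam, t) + s * m := by
      rw [Finset.sum_add_distrib, ← Finset.mul_sum, Finset.sum_const, hTcard s hs]
      simp [Nat.mul_comm]
    rw [← h2, ← h1, h3]
  -- assemble
  set P := ∑ s ∈ Finset.range k, (cellsOfBetaSet (qsetL k s L lam)).card with hP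
  set C := ∑ s ∈ Finset.range k, (∑ t ∈ qsetL k s L lam, t) with hC
  set Gm := ∑ i ∈ Finset.range m, i with hGm
  set Gk := ∑ i ∈ Finset.range k, i with hGk
  have e1 : P + k * Gm = C := by
    have h6 : C = ∑ s ∈ Finset.range k, ((cellsOfBetaSet (qsetL k s L lam)).card + Gm) :=
      (Finset.sum_congr rfl (fun s hs => hA1 s (Finset.mem_range.mp hs))).symm
    rw [h6, Finset.sum_add_distrib, Finset.sum_const, Finset.card_range, smul_eq_mul, hP]
  have e2 : lam.card + (∑ i ∈ Finset.range L, i) = k * C + Gk * m := by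
    rw [hA2, ← hA3]
    have h5 : ∑ s ∈ Finset.range k, (∑ b ∈ (betaL L lam).filter (fun b => b % k = s), b)
        = ∑ s ∈ Finset.range k, (k * (∑ t ∈ qsetL k s L lam, t) + s * m) :=
      Finset.sum_congr rfl (fun s hs => hA4 s (Finset.mem_range.mp hs))
    rw [h5, Finset.sum_add_distrib, ← Finset.mul_sum, ← hC, ← Finset.sum_mul, ← hGk]
  have e3 : (∑ i ∈ Finset.range L, i) = k * k * Gm + m * Gk := by
    rw [hm]; exact gauss_mul k m
  have e4 : k * C = k * P + k * (k * Gm) := by rw [← e1]; ring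
  have e5 : Gk * m = m * Gk := by ring
  have e6 : k * (k * Gm) = k * k * Gm := by ring
  omega

end CardSum


section Main

variable {k : ℕ} {lam : YoungDiagram}

lemma colLen_le_card (mu : YoungDiagram) : mu.colLen 0 ≤ mu.card := by
  have hsub : (Finset.range (mu.colLen 0)).image (fun i => (i, (0:ℕ))) ⊆ mu.cells := by
    intro x hx
    simp only [Finset.mem_image, Finset.mem_range] at hx
    obtain ⟨i, hi, rfl⟩ := hx
    exact (YoungDiagram.mem_cells _).mpr (YoungDiagram.mem_iff_lt_colLen.mpr hi)
  have := Finset.card_le_card hsub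
  rwa [Finset.card_image_of_injective _ (fun a b h => by simpa using h),
    Finset.card_range] at this

lemma card_qsetL_of_bal (hk : 0 < k) (hbal : Bal k lam) {L m s : ℕ} (hm : L = k * m)
    (hcl : lam.colLen 0 ≤ L) (hs : s < k) : (qsetL k s L lam).card = m := by
  have hbal' := (bal_iff hk ⟨m, hm⟩ hcl).mp hbal
  have h1 := hbal' s hs
  have h2 : k * resCount k s L lam = k * m := by omega
  rw [card_qsetL hk]
  exact Nat.eq_of_mul_eq_mul_left hk h2

lemma cells_eq_of_diagOf {T1 T2 : Finset ℕ} (h : cellsOfBetaSet T1 = cellsOfBetaSet T2) :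
    diagOf T1 = diagOf T2 := by
  ext x
  show x ∈ (diagOf T1).cells ↔ x ∈ (diagOf T2).cells
  rw [show (diagOf T1).cells = cellsOfBetaSet T1 from rfl,
    show (diagOf T2).cells = cellsOfBetaSet T2 from rfl, h]

end Main

/-- the map sending a partition of `n` with empty `k`-core to its
`k`-quotient is a bijection onto the `k`-tuples of partitions of total size `n/k`. -/
theorem kQuotient_bijective (n k : ℕ) (hk : 0 < k) (hdvd : k ∣ n) :
    Set.BijOn (kQuotientCells k)
      {lam : YoungDiagram | lam.card = n ∧ EmptyKCore k lam}
      {Q : Fin k → Finset (ℕ × ℕ) |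
        (∀ i, IsLowerSet (↑(Q i) : Set (ℕ × ℕ))) ∧ (∑ i, (Q i).card) = n / k} := by
  classical
  refine ⟨?_, ?_, ?_⟩
  · -- MapsTo
    rintro lam ⟨hcard, hcore⟩
    have hbal := bal_of_emptyKCore hk hcore
    have hL := colLen_le_numRowsPad hk lam
    constructor
    · intro i
      exact isLowerSet_cellsOfBetaSet _
    · have hsum := card_quot_sum hk hbal (dvd_numRowsPad k lam) hL
      have hconv : ∑ i : Fin k, (kQuotientCells k lam i).card
          = ∑ s ∈ Finset.range k,
            (cellsOfBetaSet (qsetL k s (numRowsPad k lam) lam)).card := by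
        rw [← Fin.sum_univ_eq_sum_range
          (fun s => (cellsOfBetaSet (qsetL k s (numRowsPad k lam) lam)).card) k]
        apply Finset.sum_congr rfl
        intro i _
        rw [kQuotientCells_eq]
      show ∑ i : Fin k, (kQuotientCells k lam i).card = n / k
      rw [hconv]
      have hn : n = k * ∑ s ∈ Finset.range k,
          (cellsOfBetaSet (qsetL k s (numRowsPad k lam) lam)).card := by
        rw [← hcard, hsum]
      rw [hn, Nat.mul_div_cancel_left _ hk]
  · -- InjOn
    rintro l1 ⟨hc1, he1⟩ l2 ⟨hc2, he2⟩ heq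
    have hb1 := bal_of_emptyKCore hk he1
    have hb2 := bal_of_emptyKCore hk he2
    set L := max (numRowsPad k l1) (numRowsPad k l2) with hLdef
    have hdL : k ∣ L := by
      rcases le_total (numRowsPad k l1) (numRowsPad k l2) with h | h
      · rw [hLdef, max_eq_right h]; exact dvd_numRowsPad k l2
      · rw [hLdef, max_eq_left h]; exact dvd_numRowsPad k l1
    have hcl1 : l1.colLen 0 ≤ L :=
      le_trans (colLen_le_numRowsPad hk l1) (le_max_left _ _)
    have hcl2 : l2.colLen 0 ≤ L :=
      le_trans (colLen_le_numRowsPad hk l2) (le_max_right _ _)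
    obtain ⟨m, hm⟩ := hdL
    have hquot : ∀ s : Fin k,
        cellsOfBetaSet (qsetL k (s:ℕ) L l1) = cellsOfBetaSet (qsetL k (s:ℕ) L l2) := by
      intro s
      rw [← quot_transfer hk ⟨m, hm⟩ hcl1 s, ← quot_transfer hk ⟨m, hm⟩ hcl2 s, heq]
    have hTeq : ∀ s : Fin k, qsetL k (s:ℕ) L l1 = qsetL k (s:ℕ) L l2 := by
      intro s
      have hd := cells_eq_of_diagOf (hquot s)
      have ht1 : betaL m (diagOf (qsetL k (s:ℕ) L l1)) = qsetL k (s:ℕ) L l1 :=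
        betaL_diagOf (card_qsetL_of_bal hk hb1 hm hcl1 s.isLt)
      have ht2 : betaL m (diagOf (qsetL k (s:ℕ) L l2)) = qsetL k (s:ℕ) L l2 :=
        betaL_diagOf (card_qsetL_of_bal hk hb2 hm hcl2 s.isLt)
      rw [← ht1, ← ht2, hd]
    have hBeq : betaL L l1 = betaL L l2 := by
      have hsub : ∀ (la lb : YoungDiagram), (∀ s : Fin k, qsetL k (s:ℕ) L la = qsetL k (s:ℕ) L lb)
          → betaL L la ⊆ betaL L lb := by
        intro la lb hq b hb
        have hsk : b % k < k := Nat.mod_lt b hk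
        have hmem : b / k ∈ qsetL k (b % k) L la := by
          rw [qsetL, Finset.mem_image]
          exact ⟨b, Finset.mem_filter.mpr ⟨hb, rfl⟩, rfl⟩
        rw [show (b % k) = ((⟨b % k, hsk⟩ : Fin k) : ℕ) from rfl, hq ⟨b % k, hsk⟩] at hmem
        rw [qsetL, Finset.mem_image] at hmem
        obtain ⟨b2, hb2, hdiv⟩ := hmem
        rw [Finset.mem_filter] at hb2
        have hb2eq : b2 = b := by
          have h1 := Nat.div_add_mod b k
          have h2 := Nat.div_add_mod b2 k
          have h3 : b2 % k = b % k := hb2.2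
          rw [hdiv, h3] at h2
          omega
        rw [← hb2eq]
        exact hb2.1
      apply Finset.Subset.antisymm
      · exact hsub l1 l2 hTeq
      · exact hsub l2 l1 (fun s => (hTeq s).symm)
    have hd1 : diagOf (betaL L l1) = l1 := diagOf_betaL hcl1
    have hd2 : diagOf (betaL L l2) = l2 := diagOf_betaL hcl2
    rw [← hd1, ← hd2, hBeq]
  · -- SurjOn
    rintro Q ⟨hlow, hsum⟩
    set m := n / k with hmdef
    set Y : Fin k → YoungDiagram := fun s => ⟨Q s, hlow s⟩ with hY
    have hQcard : ∀ s, (Q s).card ≤ m := by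
      intro s
      rw [← hsum]
      exact Finset.single_le_sum (f := fun i => (Q i).card)
        (fun i _ => Nat.zero_le _) (Finset.mem_univ s)
    have hcolY : ∀ s, (Y s).colLen 0 ≤ m := fun s =>
      le_trans (colLen_le_card (Y s)) (hQcard s)
    set T : Fin k → Finset ℕ := fun s => betaL m (Y s) with hT
    have hTcard : ∀ s, (T s).card = m := by
      intro s
      simp only [hT]
      exact card_betaL m (Y s)
    have hinj : ∀ (s : Fin k), Function.Injective (fun t => k * t + (s:ℕ)) := by
      intro s a b h
      dsimp only at h
      have h2 : k * a = k * b := by omega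
      exact Nat.eq_of_mul_eq_mul_left hk h2
    have hmodB : ∀ (s : Fin k) (t : ℕ), (k * t + (s:ℕ)) % k = (s:ℕ) := by
      intro s t
      rw [Nat.mul_add_mod, Nat.mod_eq_of_lt s.isLt]
    have hdivBk : ∀ (s : Fin k) (t : ℕ), (k * t + (s:ℕ)) / k = t := by
      intro s t
      rw [Nat.mul_add_div hk, Nat.div_eq_of_lt s.isLt]
      omega
    set B : Finset ℕ :=
      Finset.univ.biUnion (fun s : Fin k => (T s).image (fun t => k * t + (s:ℕ))) with hB
    have hdisj : ∀ s1 ∈ (Finset.univ : Finset (Fin k)), ∀ s2 ∈ Finset.univ, s1 ≠ s2 →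
        Disjoint ((T s1).image (fun t => k * t + (s1:ℕ)))
          ((T s2).image (fun t => k * t + (s2:ℕ))) := by
      intro s1 _ s2 _ hne
      rw [Finset.disjoint_left]
      intro x hx1 hx2
      simp only [Finset.mem_image] at hx1 hx2
      obtain ⟨t1, -, rfl⟩ := hx1
      obtain ⟨t2, -, he2⟩ := hx2
      apply hne
      apply Fin.ext
      rw [← hmodB s1 t1, ← hmodB s2 t2, he2]
    have hBcard : B.card = k * m := by
      rw [hB, Finset.card_biUnion hdisj]
      have : ∀ s : Fin k, ((T s).image (fun t => k * t + (s:ℕ))).card = m := by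
        intro s
        rw [Finset.card_image_of_injective _ (hinj s), hTcard s]
      rw [Finset.sum_congr rfl (fun s _ => this s), Finset.sum_const, Finset.card_univ,
        Fintype.card_fin, smul_eq_mul]
    set lam := diagOf B with hlamdef
    have hbetaB : betaL (k * m) lam = B := betaL_diagOf hBcard
    have hcollam : lam.colLen 0 ≤ k * m := by
      have := colLen_diagOf_le B
      rwa [hBcard] at this
    have hfilter : ∀ s : Fin k,
        B.filter (fun b => b % k = (s:ℕ)) = (T s).image (fun t => k * t + (s:ℕ)) := by
      intro s
      ext x
      simp only [Finset.mem_filter, hB, Finset.mem_biUnion, Finset.mem_univ, true_and]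
      constructor
      · rintro ⟨⟨s', hx⟩, hmod⟩
        simp only [Finset.mem_image] at hx
        obtain ⟨t, ht, rfl⟩ := hx
        have : s' = s := Fin.ext (by rw [← hmodB s' t, hmod])
        subst this
        exact Finset.mem_image.mpr ⟨t, ht, rfl⟩
      · intro hx
        simp only [Finset.mem_image] at hx
        obtain ⟨t, ht, rfl⟩ := hx
        exact ⟨⟨s, Finset.mem_image.mpr ⟨t, ht, rfl⟩⟩, hmodB s t⟩
    have hqsetT : ∀ s : Fin k, qsetL k (s:ℕ) (k * m) lam = T s := by
      intro s
      rw [qsetL, hbetaB, hfilter s, Finset.image_image]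
      have : ∀ t ∈ T s, ((· / k) ∘ fun t => k * t + (s:ℕ)) t = id t := by
        intro t _
        simp only [Function.comp_apply, id_eq]
        exact hdivBk s t
      rw [Finset.image_congr this, Finset.image_id]
    have hbal : Bal k lam := by
      rw [bal_iff hk ⟨m, rfl⟩ hcollam]
      intro s hs
      rw [resCount, hbetaB, hfilter ⟨s, hs⟩,
        Finset.card_image_of_injective _ (hinj ⟨s, hs⟩), hTcard ⟨s, hs⟩]
    have hcore : EmptyKCore k lam := emptyKCore_of_bal hk hbal
    have hquotQ : kQuotientCells k lam = Q := by
      funext s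
      rw [quot_transfer hk ⟨m, rfl⟩ hcollam s, hqsetT s]
      show cellsOfBetaSet (betaL m (Y s)) = Q s
      have := diagOf_betaL (lam := Y s) (L := m) (hcolY s)
      exact congrArg YoungDiagram.cells this
    have hcardlam : lam.card = n := by
      have hsum2 := card_quot_sum hk hbal ⟨m, rfl⟩ hcollam
      have hconv : ∑ s ∈ Finset.range k, (cellsOfBetaSet (qsetL k s (k * m) lam)).card
          = ∑ i : Fin k, (Q i).card := by
        rw [← Fin.sum_univ_eq_sum_range
          (fun s => (cellsOfBetaSet (qsetL k s (k * m) lam)).card) k]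
        apply Finset.sum_congr rfl
        intro i _
        rw [← quot_transfer hk ⟨m, rfl⟩ hcollam i, hquotQ]
      rw [hsum2, hconv, hsum, hmdef]
      exact Nat.mul_div_cancel' hdvd
    exact ⟨lam, ⟨hcardlam, hcore⟩, hquotQ⟩


end BorderStrips
end

section
/- Let λ and μ be partitions with empty k-core such that λ/μ is a border strip of size k, and let (λ^0,…,λ^{k-1}) and (μ^0,…,μ^{k-1}) be their k-quotients. Then there exists an index s with 0 ≤ s ≤ k-1 such that λ^s is obtained from μ^s by adding a single cell, and λ^t = μ^t for all t ≠ s. -/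
open Finset Polynomial PowerSeries
open scoped Classical

namespace BorderStrips

variable {k : ℕ}

section Proof9

/-- Beta set with explicit padding `n`. -/
def betaN (n : ℕ) (lam : YoungDiagram) : Finset ℕ :=
  (Finset.range n).image fun i => lam.rowLen i + (n - 1 - i)

lemma kQuotientCells_eq_quotN' (k : ℕ) (lam : YoungDiagram) (s : Fin k) :
    kQuotientCells k lam s =
      cellsOfBetaSet (((betaN (numRowsPad k lam) lam).filter fun b => b % k = (s : ℕ)).image
        fun b => b / k) := rfl

/-- Quotient cells with explicit padding. -/
def quotN (k n : ℕ) (lam : YoungDiagram) (s : ℕ) : Finset (ℕ × ℕ) :=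
  cellsOfBetaSet (((betaN n lam).filter fun b => b % k = s).image fun b => b / k)

lemma kQuotientCells_eq_quotN (k : ℕ) (lam : YoungDiagram) (s : Fin k) :
    kQuotientCells k lam s = quotN k (numRowsPad k lam) lam (s : ℕ) := rfl

lemma rowLen_eq_zero_of_colLen_le (lam : YoungDiagram) {i : ℕ} (h : lam.colLen 0 ≤ i) :
    lam.rowLen i = 0 := by
  by_contra h0
  have h1 : (i, 0) ∈ lam := YoungDiagram.mem_iff_lt_rowLen.mpr (Nat.pos_of_ne_zero h0)
  have h2 := YoungDiagram.mem_iff_lt_colLen.mp h1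
  omega

lemma le_numRowsPad {k : ℕ} (hk : 0 < k) (lam : YoungDiagram) :
    lam.colLen 0 ≤ numRowsPad k lam := by
  unfold numRowsPad
  have h1 := Nat.mod_add_div (lam.colLen 0 + k - 1) k
  have h2 : (lam.colLen 0 + k - 1) % k < k := Nat.mod_lt _ hk
  omega

lemma mem_cellsOfBetaSet_s9 {S : Finset ℕ} {x : ℕ × ℕ} :
    x ∈ cellsOfBetaSet S ↔ ∃ b ∈ S,
      x.1 = (S.filter fun b' => b < b').card ∧
      x.2 < b - (S.filter fun b' => b' < b).card := by
  unfold cellsOfBetaSet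
  simp only [Finset.mem_biUnion, Finset.mem_image, Finset.mem_range]
  constructor
  · rintro ⟨b, hb, j, hj, rfl⟩
    exact ⟨b, hb, rfl, hj⟩
  · rintro ⟨b, hb, h1, h2⟩
    exact ⟨b, hb, x.2, h2, by rw [← h1]⟩

lemma rank_card_injOn {T : Finset ℕ} {b1 b2 : ℕ} (h1 : b1 ∈ T) (h2 : b2 ∈ T)
    (h : (T.filter fun b' => b1 < b').card = (T.filter fun b' => b2 < b').card) :
    b1 = b2 := by
  by_contra hne
  wlog hlt : b1 < b2 generalizing b1 b2
  · exact this h2 h1 h.symm (Ne.symm hne) (by omega)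
  have hsub : insert b2 (T.filter fun b' => b2 < b') ⊆ T.filter fun b' => b1 < b' := by
    intro z hz
    rcases Finset.mem_insert.mp hz with rfl | hz
    · exact Finset.mem_filter.mpr ⟨h2, hlt⟩
    · obtain ⟨hzT, hz2⟩ := Finset.mem_filter.mp hz
      exact Finset.mem_filter.mpr ⟨hzT, by omega⟩
  have hcard := Finset.card_le_card hsub
  rw [Finset.card_insert_of_notMem (by simp)] at hcard
  omega

lemma card_filter_swap {S : Finset ℕ} {c a : ℕ} (hc : c ∈ S) (ha : a ∉ S)
    (p : ℕ → Prop) [DecidablePred p] (hpa : p a ↔ p c) :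
    ((insert a (S.erase c)).filter p).card = (S.filter p).card := by
  rw [Finset.filter_insert, Finset.filter_erase]
  by_cases h : p a
  · rw [if_pos h]
    have hcf : c ∈ S.filter p := Finset.mem_filter.mpr ⟨hc, hpa.mp h⟩
    have haf : a ∉ (S.filter p).erase c :=
      fun hm => ha (Finset.mem_filter.mp (Finset.mem_of_mem_erase hm)).1
    have hpos : 0 < (S.filter p).card := Finset.card_pos.mpr ⟨c, hcf⟩
    rw [Finset.card_insert_of_notMem haf, Finset.card_erase_of_mem hcf]
    omega
  · rw [if_neg h]
    have hcf : c ∉ S.filter p := fun hm => h (hpa.mpr (Finset.mem_filter.mp hm).2)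
    rw [Finset.erase_eq_of_notMem hcf]

lemma cellsOfBetaSet_step {S : Finset ℕ} {c : ℕ} (hc : c ∈ S) (hc1 : 1 ≤ c)
    (hnc : c - 1 ∉ S) :
    ∃ x, x ∉ cellsOfBetaSet (insert (c - 1) (S.erase c)) ∧
      cellsOfBetaSet S = insert x (cellsOfBetaSet (insert (c - 1) (S.erase c))) := by
  classical
  set S' := insert (c - 1) (S.erase c) with hS'
  have hmem' : ∀ z, z ∈ S' ↔ z = c - 1 ∨ (z ∈ S ∧ z ≠ c) := by
    intro z
    simp only [hS', Finset.mem_insert, Finset.mem_erase]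
    tauto
  have hgt : ∀ b ∈ S, b ≠ c →
      (S'.filter fun b' => b < b').card = (S.filter fun b' => b < b').card := by
    intro b hb hbc
    have hbne : b ≠ c - 1 := fun h => hnc (h ▸ hb)
    exact card_filter_swap hc hnc _ (by omega)
  have hlt : ∀ b ∈ S, b ≠ c →
      (S'.filter fun b' => b' < b).card = (S.filter fun b' => b' < b).card := by
    intro b hb hbc
    exact card_filter_swap hc hnc _ (by omega)
  have hgt' : (S'.filter fun b' => c - 1 < b') = S.filter fun b' => c < b' := by
    ext z
    simp only [Finset.mem_filter, hmem']
    constructor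
    · rintro ⟨hz1 | ⟨hzS, hzc⟩, hz2⟩
      · omega
      · exact ⟨hzS, by omega⟩
    · rintro ⟨hzS, hzc⟩
      exact ⟨Or.inr ⟨hzS, by omega⟩, by omega⟩
  have hlt' : (S'.filter fun b' => b' < c - 1) = S.filter fun b' => b' < c := by
    ext z
    simp only [Finset.mem_filter, hmem']
    constructor
    · rintro ⟨hz1 | ⟨hzS, hzc⟩, hz2⟩
      · omega
      · exact ⟨hzS, by omega⟩
    · rintro ⟨hzS, hzc⟩
      have : z ≠ c - 1 := fun h => hnc (h ▸ hzS)
      exact ⟨Or.inr ⟨hzS, by omega⟩, by omega⟩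
  have hlb : (S.filter fun b' => b' < c).card ≤ c - 1 := by
    have hsub : (S.filter fun b' => b' < c) ⊆ Finset.range (c - 1) := by
      intro z hz
      obtain ⟨hzS, hzc⟩ := Finset.mem_filter.mp hz
      have : z ≠ c - 1 := fun h => hnc (h ▸ hzS)
      exact Finset.mem_range.mpr (by omega)
    simpa using Finset.card_le_card hsub
  refine ⟨((S.filter fun b' => c < b').card, c - (S.filter fun b' => b' < c).card - 1), ?_, ?_⟩
  · intro hx
    rw [mem_cellsOfBetaSet_s9] at hx
    obtain ⟨b, hb, h1, h2⟩ := hx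
    dsimp only at h1 h2
    rcases (hmem' b).mp hb with rfl | ⟨hbS, hbc⟩
    · rw [hlt'] at h2
      omega
    · rw [hgt b hbS hbc] at h1
      exact hbc (rank_card_injOn hbS hc h1.symm)
  · ext y
    rw [mem_cellsOfBetaSet_s9, Finset.mem_insert, mem_cellsOfBetaSet_s9]
    constructor
    · rintro ⟨b, hbS, h1, h2⟩
      by_cases hbc : b = c
      · subst hbc
        by_cases hy : y.2 = b - (S.filter fun b' => b' < b).card - 1
        · left
          rw [Prod.ext_iff]
          exact ⟨h1, hy⟩
        · right
          refine ⟨b - 1, (hmem' _).mpr (Or.inl rfl), ?_, ?_⟩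
          · rw [hgt']; exact h1
          · rw [hlt']; omega
      · right
        refine ⟨b, (hmem' b).mpr (Or.inr ⟨hbS, hbc⟩), ?_, ?_⟩
        · rw [hgt b hbS hbc]; exact h1
        · rw [hlt b hbS hbc]; exact h2
    · rintro (rfl | ⟨b, hbS', h1, h2⟩)
      · exact ⟨c, hc, rfl, by omega⟩
      · rcases (hmem' b).mp hbS' with rfl | ⟨hbS, hbc⟩
        · refine ⟨c, hc, ?_, ?_⟩
          · rw [hgt'] at h1; exact h1
          · rw [hlt'] at h2; omega
        · refine ⟨b, hbS, ?_, ?_⟩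
          · rw [hgt b hbS hbc] at h1; exact h1
          · rw [hlt b hbS hbc] at h2; exact h2

lemma cellsOfBetaSet_shift_s9 (S : Finset ℕ) :
    cellsOfBetaSet (insert 0 (S.image fun b => b + 1)) = cellsOfBetaSet S := by
  classical
  set S' := insert 0 (S.image fun b => b + 1) with hS'
  have hgt : ∀ b, (S'.filter fun b' => b + 1 < b').card = (S.filter fun b' => b < b').card := by
    intro b
    have he : S'.filter (fun b' => b + 1 < b') = (S.filter fun b' => b < b').image (fun b => b + 1) := by
      ext z
      simp only [hS', Finset.mem_insert, Finset.mem_filter, Finset.mem_image]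
      constructor
      · rintro ⟨rfl | ⟨w, hw, rfl⟩, hz⟩
        · omega
        · exact ⟨w, ⟨hw, by omega⟩, rfl⟩
      · rintro ⟨w, ⟨hw, hwb⟩, rfl⟩
        exact ⟨Or.inr ⟨w, hw, rfl⟩, by omega⟩
    rw [he, Finset.card_image_of_injective _ (fun a b h => by omega)]
  have hlt : ∀ b, (S'.filter fun b' => b' < b + 1).card = (S.filter fun b' => b' < b).card + 1 := by
    intro b
    have he : S'.filter (fun b' => b' < b + 1)
        = insert 0 ((S.filter fun b' => b' < b).image (fun b => b + 1)) := by
      ext z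
      simp only [hS', Finset.mem_insert, Finset.mem_filter, Finset.mem_image]
      constructor
      · rintro ⟨rfl | ⟨w, hw, rfl⟩, hz⟩
        · exact Or.inl rfl
        · exact Or.inr ⟨w, ⟨hw, by omega⟩, rfl⟩
      · rintro (rfl | ⟨w, ⟨hw, hwb⟩, rfl⟩)
        · exact ⟨Or.inl rfl, by omega⟩
        · exact ⟨Or.inr ⟨w, hw, rfl⟩, by omega⟩
    rw [he, Finset.card_insert_of_notMem (by simp),
      Finset.card_image_of_injective _ (fun a b h => by omega)]
  ext y
  rw [mem_cellsOfBetaSet_s9, mem_cellsOfBetaSet_s9]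
  constructor
  · rintro ⟨b, hb, h1, h2⟩
    rcases Finset.mem_insert.mp hb with rfl | hb'
    · omega
    · obtain ⟨w, hw, rfl⟩ := Finset.mem_image.mp hb'
      refine ⟨w, hw, ?_, ?_⟩
      · rw [← hgt w]; exact h1
      · rw [hlt w] at h2; omega
  · rintro ⟨b, hb, h1, h2⟩
    refine ⟨b + 1, Finset.mem_insert.mpr (Or.inr (Finset.mem_image.mpr ⟨b, hb, rfl⟩)), ?_, ?_⟩
    · rw [hgt b]; exact h1
    · rw [hlt b]; omega

lemma betaN_add {k : ℕ} (hk : 0 < k) (n : ℕ) (lam : YoungDiagram) (hn : lam.colLen 0 ≤ n) :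
    betaN (n + k) lam = Finset.range k ∪ (betaN n lam).image (fun b => b + k) := by
  ext b
  simp only [betaN, Finset.mem_union, Finset.mem_image, Finset.mem_range]
  constructor
  · rintro ⟨i, hi, rfl⟩
    by_cases hin : i < n
    · right
      exact ⟨lam.rowLen i + (n - 1 - i), ⟨i, hin, rfl⟩, by omega⟩
    · left
      have h0 : lam.rowLen i = 0 := rowLen_eq_zero_of_colLen_le lam (by omega)
      omega
  · rintro (hb | ⟨a, ⟨i, hin, rfl⟩, rfl⟩)
    · refine ⟨n + k - 1 - b, by omega, ?_⟩
      have h0 : lam.rowLen (n + k - 1 - b) = 0 := rowLen_eq_zero_of_colLen_le lam (by omega)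
      omega
    · exact ⟨i, by omega, by omega⟩

lemma quotN_succ {k : ℕ} (hk : 0 < k) {s : ℕ} (hs : s < k) (n : ℕ) (lam : YoungDiagram)
    (hn : lam.colLen 0 ≤ n) :
    quotN k (n + k) lam s = quotN k n lam s := by
  unfold quotN
  rw [betaN_add hk n lam hn]
  have he : ((Finset.range k ∪ (betaN n lam).image (fun b => b + k)).filter
        fun b => b % k = s).image (fun b => b / k)
      = insert 0 ((((betaN n lam).filter fun b => b % k = s).image (fun b => b / k)).image
        (fun b => b + 1)) := by
    ext y
    simp only [Finset.mem_image, Finset.mem_filter, Finset.mem_union, Finset.mem_range,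
      Finset.mem_insert]
    constructor
    · rintro ⟨b, ⟨hb | hb, hmod⟩, rfl⟩
      · left
        have hbs : b = s := by rw [Nat.mod_eq_of_lt hb] at hmod; exact hmod
        subst hbs
        exact Nat.div_eq_of_lt hb
      · obtain ⟨a, ha, rfl⟩ := hb
        right
        refine ⟨a / k, ⟨a, ⟨ha, ?_⟩, rfl⟩, ?_⟩
        · rwa [Nat.add_mod_right] at hmod
        · rw [Nat.add_div_right _ hk]
    · rintro (rfl | ⟨z, ⟨a, ⟨ha, hamod⟩, rfl⟩, rfl⟩)
      · exact ⟨s, ⟨Or.inl hs, Nat.mod_eq_of_lt hs⟩, Nat.div_eq_of_lt hs⟩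
      · exact ⟨a + k, ⟨Or.inr ⟨a, ha, rfl⟩, by rw [Nat.add_mod_right]; exact hamod⟩,
          by rw [Nat.add_div_right _ hk]⟩
  rw [he, cellsOfBetaSet_shift_s9]

lemma quotN_pad {k : ℕ} (hk : 0 < k) {s : ℕ} (hs : s < k) (n c : ℕ) (lam : YoungDiagram)
    (hn : lam.colLen 0 ≤ n) :
    quotN k (n + c * k) lam s = quotN k n lam s := by
  induction c with
  | zero => norm_num
  | succ c ih =>
      have he : n + (c + 1) * k = (n + c * k) + k := by ring
      rw [he, quotN_succ hk hs (n + c * k) lam (by omega), ih]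

lemma mem_image_div {k s : ℕ} (hk : 0 < k) (hs : s < k) (B : Finset ℕ) (y : ℕ) :
    y ∈ (B.filter fun b => b % k = s).image (fun b => b / k) ↔ k * y + s ∈ B := by
  simp only [Finset.mem_image, Finset.mem_filter]
  constructor
  · rintro ⟨b, ⟨hb, hmod⟩, rfl⟩
    have hdm := Nat.div_add_mod b k
    rw [hmod] at hdm
    rwa [hdm]
  · intro h
    refine ⟨k * y + s, ⟨h, ?_⟩, ?_⟩
    · rw [Nat.mul_add_mod]; exact Nat.mod_eq_of_lt hs
    · rw [Nat.mul_add_div hk, Nat.div_eq_of_lt hs]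
      omega

end Proof9

section Proof9b

lemma beta_move {k N : ℕ} (hk : 0 < k) {lam mu : YoungDiagram}
    (hstrip : IsBorderStripOfSize k mu lam) (hN : lam.colLen 0 ≤ N) :
    ∃ b, b ∈ betaN N lam ∧ k ≤ b ∧ b - k ∉ betaN N lam ∧
      betaN N mu = insert (b - k) ((betaN N lam).erase b) := by
  classical
  obtain ⟨hsub, hcard, hconn, h2x2⟩ := hstrip
  set D := lam.cells \ mu.cells with hDdef
  have hmemD : ∀ i j : ℕ, (i, j) ∈ D ↔ mu.rowLen i ≤ j ∧ j < lam.rowLen i := by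
    intro i j
    rw [hDdef, Finset.mem_sdiff, YoungDiagram.mem_cells, YoungDiagram.mem_cells,
      YoungDiagram.mem_iff_lt_rowLen, YoungDiagram.mem_iff_lt_rowLen]
    omega
  have hle : ∀ i, mu.rowLen i ≤ lam.rowLen i := by
    intro i
    by_contra h
    push_neg at h
    have hmem : (i, lam.rowLen i) ∈ mu := YoungDiagram.mem_iff_lt_rowLen.mpr h
    have hmem2 : (i, lam.rowLen i) ∈ lam :=
      (YoungDiagram.mem_cells _).mp (hsub ((YoungDiagram.mem_cells _).mpr hmem))
    exact absurd (YoungDiagram.mem_iff_lt_rowLen.mp hmem2) (lt_irrefl _)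
  have hDne : D.Nonempty := Finset.card_pos.mp (by omega)
  set R := D.image Prod.fst with hR
  have hRne : R.Nonempty := hDne.image _
  have hmemR : ∀ i, i ∈ R ↔ mu.rowLen i < lam.rowLen i := by
    intro i
    rw [hR, Finset.mem_image]
    constructor
    · rintro ⟨x, hx, rfl⟩
      have h := (hmemD x.1 x.2).mp hx
      omega
    · intro hi
      exact ⟨(i, mu.rowLen i), (hmemD i (mu.rowLen i)).mpr ⟨le_rfl, hi⟩, rfl⟩
  set i1 := R.min' hRne with hi1
  set i2 := R.max' hRne with hi2
  have hi12 : i1 ≤ i2 := R.min'_le _ (R.max'_mem hRne)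
  have hAdjrow : ∀ a b : ℕ × ℕ, Adj a b → b.1 ≤ a.1 + 1 := by
    intro a b hab
    rcases hab with ⟨h1, h2⟩ | ⟨h1, h2⟩ <;> omega
  have hpath : ∀ x y : ℕ × ℕ,
      Relation.ReflTransGen (fun a b => a ∈ D ∧ b ∈ D ∧ Adj a b) x y →
      x ∈ D → ∀ r, x.1 ≤ r → r ≤ y.1 → ∃ z ∈ D, z.1 = r := by
    intro x y hxy hx
    induction hxy with
    | refl => intro r h1 h2; exact ⟨x, hx, by omega⟩
    | @tail b c hxb hbc ih =>
        intro r h1 h2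
        by_cases hr : r ≤ b.1
        · exact ih r h1 hr
        · have h3 := hAdjrow b c hbc.2.2
          have h4 : r = c.1 := by omega
          exact ⟨c, hbc.2.1, h4.symm⟩
  have hinterval : ∀ i, i1 ≤ i → i ≤ i2 → mu.rowLen i < lam.rowLen i := by
    intro i h1 h2
    obtain ⟨x, hxD, hx1⟩ : ∃ x ∈ D, x.1 = i1 := by
      obtain ⟨x, hx, he⟩ := Finset.mem_image.mp (R.min'_mem hRne)
      exact ⟨x, hx, he⟩
    obtain ⟨y, hyD, hy1⟩ : ∃ y ∈ D, y.1 = i2 := by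
      obtain ⟨y, hy, he⟩ := Finset.mem_image.mp (R.max'_mem hRne)
      exact ⟨y, hy, he⟩
    obtain ⟨z, hz, hz1⟩ := hpath x y (hconn x hxD y hyD) hxD i (by omega) (by omega)
    have hzR : z.1 ∈ R := (hmemR z.1).mpr (by have := (hmemD z.1 z.2).mp hz; omega)
    rw [hz1] at hzR
    exact (hmemR i).mp hzR
  have hstep : ∀ i, i1 ≤ i → i < i2 → lam.rowLen (i + 1) = mu.rowLen i + 1 := by
    intro i h1 h2
    have hi : mu.rowLen i < lam.rowLen i := hinterval i h1 (by omega)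
    have hi' : mu.rowLen (i + 1) < lam.rowLen (i + 1) := hinterval (i + 1) (by omega) (by omega)
    have hmuA : mu.rowLen (i + 1) ≤ mu.rowLen i := mu.rowLen_anti i (i + 1) (by omega)
    have hlaA : lam.rowLen (i + 1) ≤ lam.rowLen i := lam.rowLen_anti i (i + 1) (by omega)
    have hub : lam.rowLen (i + 1) ≤ mu.rowLen i + 1 := by
      by_contra hcon
      push_neg at hcon
      exact h2x2 ⟨i, mu.rowLen i,
        (hmemD _ _).mpr ⟨le_rfl, by omega⟩,
        (hmemD _ _).mpr ⟨by omega, by omega⟩,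
        (hmemD _ _).mpr ⟨by omega, by omega⟩,
        (hmemD _ _).mpr ⟨by omega, by omega⟩⟩
    have hlb : mu.rowLen i < lam.rowLen (i + 1) := by
      by_contra hcon
      push_neg at hcon
      have hinv : ∀ z, Relation.ReflTransGen (fun a b => a ∈ D ∧ b ∈ D ∧ Adj a b)
          (i, mu.rowLen i) z → z.1 ≤ i := by
        intro z hz
        induction hz with
        | refl => exact le_rfl
        | @tail b c hxb hbc ih =>
            by_contra hc1
            push_neg at hc1
            have hbD := hbc.1
            have hcD := hbc.2.1
            rcases hbc.2.2 with ⟨he, h2'⟩ | ⟨he, h2'⟩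
            · omega
            · rcases h2' with h2' | h2'
              · omega
              · have hb1 : b.1 = i := by omega
                have hc1' : c.1 = i + 1 := by omega
                have hbm := (hmemD b.1 b.2).mp hbD
                have hcm := (hmemD c.1 c.2).mp hcD
                rw [hb1] at hbm
                rw [hc1'] at hcm
                omega
      have hx : ((i : ℕ), mu.rowLen i) ∈ D := (hmemD _ _).mpr ⟨le_rfl, hi⟩
      have hy : ((i + 1 : ℕ), mu.rowLen (i + 1)) ∈ D := (hmemD _ _).mpr ⟨le_rfl, hi'⟩
      have hcontra : i + 1 ≤ i := hinv _ (hconn _ hx _ hy)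
      omega
    omega
  have houtside : ∀ i, i < i1 ∨ i2 < i → mu.rowLen i = lam.rowLen i := by
    intro i hi
    have hnR : ¬ mu.rowLen i < lam.rowLen i := by
      intro hlt
      have hiR : i ∈ R := (hmemR i).mpr hlt
      have ha := R.min'_le i hiR
      have hb := R.le_max' i hiR
      omega
    have := hle i
    omega
  have hi2col : i2 < lam.colLen 0 := by
    have h1 := hinterval i2 hi12 le_rfl
    have hpos : 0 < lam.rowLen i2 := by omega
    have hmem : (i2, 0) ∈ lam := YoungDiagram.mem_iff_lt_rowLen.mpr hpos
    exact YoungDiagram.mem_iff_lt_colLen.mp hmem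
  have hi2N : i2 < N := lt_of_lt_of_le hi2col hN
  -- cardinality decomposition
  have hDeq : D = (Finset.Icc i1 i2).biUnion
      (fun i => (Finset.Ico (mu.rowLen i) (lam.rowLen i)).image (fun j => (i, j))) := by
    ext x
    simp only [Finset.mem_biUnion, Finset.mem_Icc, Finset.mem_image, Finset.mem_Ico]
    constructor
    · intro hx
      have hm := (hmemD x.1 x.2).mp hx
      have hiR : x.1 ∈ R := by rw [hR]; exact Finset.mem_image.mpr ⟨x, hx, rfl⟩
      exact ⟨x.1, ⟨R.min'_le _ hiR, R.le_max' _ hiR⟩, x.2, ⟨hm.1, hm.2⟩, rfl⟩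
    · rintro ⟨i, hi, j, hj, rfl⟩
      exact (hmemD i j).mpr hj
  have hsum : ∑ i ∈ Finset.Icc i1 i2, (lam.rowLen i - mu.rowLen i) = k := by
    have h1 : D.card = ∑ i ∈ Finset.Icc i1 i2,
        ((Finset.Ico (mu.rowLen i) (lam.rowLen i)).image (fun j => (i, j))).card := by
      rw [hDeq]
      apply Finset.card_biUnion
      intro a ha b hb hab
      simp only [Finset.disjoint_left, Finset.mem_image, Finset.mem_Ico]
      rintro z ⟨j, hj, rfl⟩ ⟨j', hj', hz⟩
      obtain ⟨hba, -⟩ := Prod.mk.inj hz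
      exact hab hba.symm
    have h2 : ∀ i ∈ Finset.Icc i1 i2,
        ((Finset.Ico (mu.rowLen i) (lam.rowLen i)).image (fun j => (i, j))).card
          = lam.rowLen i - mu.rowLen i := by
      intro i _
      rw [Finset.card_image_of_injective _ (fun a b h => (Prod.mk.inj h).2), Nat.card_Ico]
    rw [← hcard, h1]
    exact (Finset.sum_congr rfl h2).symm
  have hfanti : ∀ i j, i < j → j < N →
      lam.rowLen j + (N - 1 - j) < lam.rowLen i + (N - 1 - i) := by
    intro i j hij hj
    have := lam.rowLen_anti i j (le_of_lt hij)
    omega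
  have hganti : ∀ i j, i < j → j < N →
      mu.rowLen j + (N - 1 - j) < mu.rowLen i + (N - 1 - i) := by
    intro i j hij hj
    have := mu.rowLen_anti i j (le_of_lt hij)
    omega
  have hmid : ∀ i, i1 ≤ i → i < i2 →
      mu.rowLen i + (N - 1 - i) = lam.rowLen (i + 1) + (N - 1 - (i + 1)) := by
    intro i ha hb
    have := hstep i ha hb
    omega
  have hout : ∀ i, i < i1 ∨ i2 < i →
      mu.rowLen i + (N - 1 - i) = lam.rowLen i + (N - 1 - i) := by
    intro i h
    rw [houtside i h]
  have hsum2 : ∑ i ∈ Finset.Icc i1 i2, (lam.rowLen i + (N - 1 - i))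
      = (∑ i ∈ Finset.Icc i1 i2, (mu.rowLen i + (N - 1 - i))) + k := by
    have e1 : ∀ i ∈ Finset.Icc i1 i2, lam.rowLen i + (N - 1 - i)
        = (mu.rowLen i + (N - 1 - i)) + (lam.rowLen i - mu.rowLen i) := by
      intro i _
      have := hle i
      omega
    rw [Finset.sum_congr rfl e1, Finset.sum_add_distrib, hsum]
  have hkey : lam.rowLen i1 + (N - 1 - i1) = (mu.rowLen i2 + (N - 1 - i2)) + k := by
    rcases eq_or_lt_of_le hi12 with heq | hlt12
    · rw [← heq] at hsum2 ⊢
      rw [Finset.Icc_self, Finset.sum_singleton, Finset.sum_singleton] at hsum2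
      exact hsum2
    · have hsplit1 : Finset.Icc i1 i2 = insert i1 (Finset.Icc (i1 + 1) i2) := by
        ext z
        simp only [Finset.mem_Icc, Finset.mem_insert]
        omega
      have hsplit2 : Finset.Icc i1 i2 = insert i2 (Finset.Icc i1 (i2 - 1)) := by
        ext z
        simp only [Finset.mem_Icc, Finset.mem_insert]
        omega
      have hni1 : i1 ∉ Finset.Icc (i1 + 1) i2 := by
        simp only [Finset.mem_Icc]
        omega
      have hni2 : i2 ∉ Finset.Icc i1 (i2 - 1) := by
        simp only [Finset.mem_Icc]
        omega
      have hshift : ∑ i ∈ Finset.Icc i1 (i2 - 1), (mu.rowLen i + (N - 1 - i))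
          = ∑ i ∈ Finset.Icc (i1 + 1) i2, (lam.rowLen i + (N - 1 - i)) := by
        have hmap : Finset.Icc (i1 + 1) i2 = (Finset.Icc i1 (i2 - 1)).map (addRightEmbedding 1) := by
          rw [Finset.map_add_right_Icc]
          have h21 : i2 - 1 + 1 = i2 := by omega
          rw [h21]
        rw [hmap, Finset.sum_map]
        apply Finset.sum_congr rfl
        intro i hi
        rw [Finset.mem_Icc] at hi
        simp only [addRightEmbedding_apply]
        exact hmid i hi.1 (by omega)
      have hL : ∑ i ∈ Finset.Icc i1 i2, (lam.rowLen i + (N - 1 - i))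
          = (lam.rowLen i1 + (N - 1 - i1)) + ∑ i ∈ Finset.Icc (i1 + 1) i2, (lam.rowLen i + (N - 1 - i)) := by
        rw [hsplit1, Finset.sum_insert hni1]
      have hM : ∑ i ∈ Finset.Icc i1 i2, (mu.rowLen i + (N - 1 - i))
          = (mu.rowLen i2 + (N - 1 - i2)) + ∑ i ∈ Finset.Icc i1 (i2 - 1), (mu.rowLen i + (N - 1 - i)) := by
        rw [hsplit2, Finset.sum_insert hni2]
      rw [hshift] at hM
      omega
  refine ⟨lam.rowLen i1 + (N - 1 - i1), ?_, by omega, ?_, ?_⟩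
  · simp only [betaN, Finset.mem_image, Finset.mem_range]
    exact ⟨i1, by omega, rfl⟩
  · intro hmem
    simp only [betaN, Finset.mem_image, Finset.mem_range] at hmem
    obtain ⟨j, hj, hjeq⟩ := hmem
    rcases lt_trichotomy j i1 with h | h | h
    · have := hfanti j i1 h (by omega)
      omega
    · subst h
      omega
    · rcases le_or_gt j i2 with h2 | h2
      · have hm := hmid (j - 1) (by omega) (by omega)
        have hj1 : j - 1 + 1 = j := by omega
        rw [hj1] at hm
        rcases eq_or_lt_of_le (by omega : j - 1 ≤ i2) with he | hlt
        · omega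
        · have := hganti (j - 1) i2 hlt hi2N
          omega
      · have he := hout j (Or.inr h2)
        have := hganti i2 j h2 (by omega)
        omega
  · ext y
    simp only [betaN, Finset.mem_image, Finset.mem_range, Finset.mem_insert, Finset.mem_erase]
    constructor
    · rintro ⟨i, hiN, rfl⟩
      by_cases hc2 : i = i2
      · subst hc2
        left
        omega
      · right
        rcases lt_or_ge i i1 with h | h
        · constructor
          · have h1 := hfanti i i1 h (by omega)
            have h2 := hout i (Or.inl h)
            omega
          · exact ⟨i, hiN, (hout i (Or.inl h)).symm⟩
        · rcases lt_or_ge i i2 with h' | h'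
          · have hm := hmid i h h'
            constructor
            · have := hfanti i1 (i + 1) (by omega) (by omega)
              omega
            · exact ⟨i + 1, by omega, hm.symm⟩
          · have h2 : i2 < i := by omega
            constructor
            · have := hganti i2 i h2 hiN
              have h3 := hout i (Or.inr h2)
              omega
            · exact ⟨i, hiN, (hout i (Or.inr h2)).symm⟩
    · rintro (heq | ⟨hne, i, hiN, rfl⟩)
      · exact ⟨i2, by omega, by omega⟩
      · have hii1 : i ≠ i1 := fun h => hne (by rw [h])
        rcases lt_or_ge i i1 with h | h
        · exact ⟨i, hiN, hout i (Or.inl h)⟩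
        · rcases le_or_gt i i2 with h' | h'
          · have hm := hmid (i - 1) (by omega) (by omega)
            have hj1 : i - 1 + 1 = i := by omega
            rw [hj1] at hm
            exact ⟨i - 1, by omega, hm⟩
          · exact ⟨i, hiN, hout i (Or.inr h')⟩

end Proof9b

/-- if `λ/μ` is a border strip of size `k` (both with empty
`k`-core), then the `k`-quotient of `λ` is obtained from that of `μ` by adding
a single cell to one component. -/
theorem kQuotient_strip_removal (k : ℕ) (hk : 0 < k) (lam mu : YoungDiagram)
    (hclam : EmptyKCore k lam) (hcmu : EmptyKCore k mu)
    (hstrip : IsBorderStripOfSize k mu lam) :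
    ∃ s : Fin k,
      (∃ x, x ∉ kQuotientCells k mu s ∧
        kQuotientCells k lam s = insert x (kQuotientCells k mu s)) ∧
      ∀ t : Fin k, t ≠ s → kQuotientCells k lam t = kQuotientCells k mu t := by
  classical
  have hsub := hstrip.1
  have hcol : mu.colLen 0 ≤ lam.colLen 0 := by
    by_contra h
    push_neg at h
    have hmem : (lam.colLen 0, 0) ∈ mu := YoungDiagram.mem_iff_lt_colLen.mpr h
    have hmem2 : (lam.colLen 0, 0) ∈ lam :=
      (YoungDiagram.mem_cells _).mp (hsub ((YoungDiagram.mem_cells _).mpr hmem))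
    exact absurd (YoungDiagram.mem_iff_lt_colLen.mp hmem2) (lt_irrefl _)
  have hNlam := le_numRowsPad hk lam
  have hNmu := le_numRowsPad hk mu
  set N := numRowsPad k lam with hN
  have hpadle : numRowsPad k mu ≤ N := by
    rw [hN]
    unfold numRowsPad
    exact Nat.mul_le_mul_left k (Nat.div_le_div_right (by omega))
  obtain ⟨c, hcN⟩ : ∃ c, N = numRowsPad k mu + c * k := by
    obtain ⟨a, ha⟩ : k ∣ N := by rw [hN]; exact ⟨_, rfl⟩
    obtain ⟨b, hb⟩ : k ∣ numRowsPad k mu := ⟨_, rfl⟩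
    have hba : b ≤ a := Nat.le_of_mul_le_mul_left (by rw [← ha, ← hb]; exact hpadle) hk
    obtain ⟨d, rfl⟩ := Nat.exists_eq_add_of_le hba
    exact ⟨d, by rw [ha, hb]; ring⟩
  have hmuQ : ∀ s : Fin k, kQuotientCells k mu s = quotN k N mu (s : ℕ) := by
    intro s
    rw [kQuotientCells_eq_quotN, hcN]
    exact (quotN_pad hk s.isLt (numRowsPad k mu) c mu hNmu).symm
  obtain ⟨b, hbmem, hkb, hnotb, hbeta⟩ := beta_move hk hstrip hNlam
  set s : Fin k := ⟨b % k, Nat.mod_lt b hk⟩ with hs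
  have hsv : (s : ℕ) = b % k := rfl
  have hdm := Nat.div_add_mod b k
  have hc1 : 1 ≤ b / k := (Nat.one_le_div_iff hk).mpr hkb
  have hbk_eq : b - k = k * (b / k - 1) + b % k := by
    obtain ⟨q, hq⟩ : ∃ q, b / k = q + 1 := ⟨b / k - 1, by omega⟩
    rw [hq] at hdm ⊢
    have hmulq : k * (q + 1) = k * q + k := by ring
    have hq1 : q + 1 - 1 = q := by omega
    rw [hq1]
    omega
  have hdm := Nat.div_add_mod b k
  have hdiv_sub : (b - k) / k = b / k - 1 := by
    rw [hbk_eq, Nat.mul_add_div hk, Nat.div_eq_of_lt (Nat.mod_lt b hk)]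
    omega
  have hmod_sub : (b - k) % k = b % k := by
    rw [hbk_eq, Nat.mul_add_mod]
    exact Nat.mod_eq_of_lt (Nat.mod_lt b hk)
  have hfilter_ne : ∀ t : ℕ, t ≠ b % k →
      (betaN N mu).filter (fun bb => bb % k = t)
        = (betaN N lam).filter (fun bb => bb % k = t) := by
    intro t ht
    rw [hbeta]
    ext z
    simp only [Finset.mem_filter, Finset.mem_insert, Finset.mem_erase]
    constructor
    · rintro ⟨rfl | ⟨hzb, hz⟩, hmod⟩
      · rw [hmod_sub] at hmod
        exact absurd hmod.symm ht
      · exact ⟨hz, hmod⟩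
    · rintro ⟨hz, hmod⟩
      refine ⟨Or.inr ⟨?_, hz⟩, hmod⟩
      rintro rfl
      exact ht hmod.symm
  refine ⟨s, ?_, ?_⟩
  · have hQmu : ((betaN N mu).filter (fun bb => bb % k = (s : ℕ))).image (fun bb => bb / k)
        = insert (b / k - 1)
          ((((betaN N lam).filter (fun bb => bb % k = (s : ℕ))).image
            (fun bb => bb / k)).erase (b / k)) := by
      ext y
      rw [mem_image_div hk s.isLt, Finset.mem_insert, Finset.mem_erase, mem_image_div hk s.isLt,
        hbeta, Finset.mem_insert, Finset.mem_erase]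
      constructor
      · rintro (heq | ⟨hne, hmem⟩)
        · left
          rw [hsv] at heq
          have h1 : k * y + b % k = k * (b / k - 1) + b % k := heq.trans hbk_eq
          have h2 : k * y = k * (b / k - 1) := by omega
          exact Nat.eq_of_mul_eq_mul_left hk h2
        · right
          refine ⟨?_, hmem⟩
          rintro rfl
          apply hne
          rw [hsv]
          exact hdm
      · rintro (rfl | ⟨hne, hmem⟩)
        · left
          rw [hsv]
          exact hbk_eq.symm
        · right
          refine ⟨?_, hmem⟩
          intro heq
          apply hne
          rw [hsv] at heq
          have h1 : k * y + b % k = k * (b / k) + b % k := heq.trans hdm.symm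
          have h2 : k * y = k * (b / k) := by omega
          exact Nat.eq_of_mul_eq_mul_left hk h2
    have hbQ : b / k ∈ ((betaN N lam).filter fun bb => bb % k = (s : ℕ)).image
        (fun bb => bb / k) := by
      rw [mem_image_div hk s.isLt]
      have h : k * (b / k) + (s : ℕ) = b := by rw [hsv]; exact hdm
      rwa [h]
    have hnQ : b / k - 1 ∉ ((betaN N lam).filter fun bb => bb % k = (s : ℕ)).image
        (fun bb => bb / k) := by
      rw [mem_image_div hk s.isLt]
      have h : k * (b / k - 1) + (s : ℕ) = b - k := by rw [hsv]; exact hbk_eq.symm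
      rwa [h]
    obtain ⟨x, hx1, hx2⟩ := cellsOfBetaSet_step hbQ hc1 hnQ
    refine ⟨x, ?_, ?_⟩
    · rw [hmuQ s]
      unfold quotN
      rw [hQmu]
      exact hx1
    · rw [kQuotientCells_eq_quotN, ← hN, hmuQ s]
      unfold quotN
      rw [hQmu]
      exact hx2
  · intro t hts
    have htv : (t : ℕ) ≠ b % k := by
      intro h
      exact hts (Fin.ext (h.trans hsv.symm))
    rw [kQuotientCells_eq_quotN, ← hN, hmuQ t]
    unfold quotN
    rw [hfilter_ne t htv]


end BorderStrips
end

section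
/- Let λ be a partition with empty k-core and k-quotient (λ^0,…,λ^{k-1}). Then the multiset of hook lengths of λ divisible by k, each divided by k, equals the disjoint union over i of the multisets of hook lengths of λ^i. -/
open Finset Polynomial PowerSeries
open scoped Classical

namespace BorderStrips

variable {k : ℕ}

namespace HookAux

def rIdx (S : Finset ℕ) (b : ℕ) : ℕ := (S.filter fun b' => b < b').card
def cCnt (S : Finset ℕ) (b : ℕ) : ℕ := (S.filter fun b' => b' < b).card
def rLen (S : Finset ℕ) (b : ℕ) : ℕ := b - cCnt S b

lemma cells_eq (S : Finset ℕ) : cellsOfBetaSet S =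
    S.biUnion fun b => (Finset.range (rLen S b)).image fun j => (rIdx S b, j) := rfl

variable {S : Finset ℕ}

lemma cCnt_le (b : ℕ) : cCnt S b ≤ b := by
  have h : (S.filter fun b' => b' < b) ⊆ Finset.range b := by
    intro a ha
    simp only [Finset.mem_filter] at ha
    simpa using ha.2
  simpa [cCnt] using Finset.card_le_card h

lemma cCnt_split {c d : ℕ} (h : c ≤ d) :
    cCnt S d = cCnt S c + (S.filter fun a => c ≤ a ∧ a < d).card := by
  have e1 : (S.filter fun b' => b' < d).filter (fun a => a < c)
      = S.filter fun b' => b' < c := by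
    rw [Finset.filter_filter]
    exact Finset.filter_congr fun a _ => by omega
  have e2 : (S.filter fun b' => b' < d).filter (fun a => ¬ a < c)
      = S.filter fun a => c ≤ a ∧ a < d := by
    rw [Finset.filter_filter]
    exact Finset.filter_congr fun a _ => by omega
  unfold cCnt
  rw [← Finset.card_filter_add_card_filter_not (p := fun a => a < c)
      (s := S.filter fun b' => b' < d), e1, e2]

lemma card_between_le (c d : ℕ) : (S.filter fun a => c ≤ a ∧ a < d).card ≤ d - c := by
  have h : (S.filter fun a => c ≤ a ∧ a < d) ⊆ Finset.Ico c d := by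
    intro a ha
    simp only [Finset.mem_filter] at ha
    simp [Finset.mem_Ico]
    omega
  simpa using Finset.card_le_card h

lemma card_between_le' {c : ℕ} (hc : c ∉ S) (d : ℕ) :
    (S.filter fun a => c ≤ a ∧ a < d).card ≤ d - c - 1 := by
  have h : (S.filter fun a => c ≤ a ∧ a < d) ⊆ Finset.Ico (c + 1) d := by
    intro a ha
    simp only [Finset.mem_filter] at ha
    have : a ≠ c := fun h => hc (h ▸ ha.1)
    simp [Finset.mem_Ico]
    omega
  have := Finset.card_le_card h
  simp [Nat.card_Ico] at this
  omega

lemma rLen_lt_rLen {c b : ℕ} (hc : c ∉ S) (hcb : c < b) : rLen S c < rLen S b := by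
  have h1 := cCnt_split (S := S) (Nat.le_of_lt hcb)
  have h2 := card_between_le' hc b
  have h3 := cCnt_le (S := S) c
  unfold rLen
  omega

lemma rLen_le_rLen {b' c : ℕ} (hb' : b' ∈ S) (h : b' < c) : rLen S b' ≤ rLen S c := by
  have h1 := cCnt_split (S := S) (Nat.le_of_lt h)
  have h2 := card_between_le (S := S) b' c
  have h3 : 0 < (S.filter fun a => b' ≤ a ∧ a < c).card :=
    Finset.card_pos.2 ⟨b', Finset.mem_filter.2 ⟨hb', le_refl _, h⟩⟩
  have h4 := cCnt_le (S := S) b'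
  unfold rLen
  omega

lemma rLen_lt_iff {b' c : ℕ} (hb' : b' ∈ S) (hc : c ∉ S) : rLen S c < rLen S b' ↔ c < b' := by
  constructor
  · intro h
    by_contra hh
    have hne : b' ≠ c := fun he => hc (he ▸ hb')
    have : b' < c := by omega
    exact absurd (rLen_le_rLen hb' this) (by omega)
  · exact rLen_lt_rLen hc

lemma rIdx_lt {b b' : ℕ} (hb : b ∈ S) (h : b' < b) : rIdx S b < rIdx S b' := by
  have hsub : S.filter (fun a => b < a) ⊆ S.filter (fun a => b' < a) := by
    intro a ha
    simp only [Finset.mem_filter] at ha ⊢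
    exact ⟨ha.1, lt_trans h ha.2⟩
  have hmem : b ∈ S.filter (fun a => b' < a) := Finset.mem_filter.2 ⟨hb, h⟩
  have hnot : b ∉ S.filter (fun a => b < a) := by simp
  exact Finset.card_lt_card ((Finset.ssubset_iff_of_subset hsub).2 ⟨b, hmem, hnot⟩)

lemma rIdx_injOn : Set.InjOn (rIdx S) S := by
  intro a ha b hb hab
  rcases lt_trichotomy a b with h | h | h
  · have := rIdx_lt hb h; omega
  · exact h
  · have := rIdx_lt ha h; omega

lemma mem_cellsOfBetaSet {x : ℕ × ℕ} :
    x ∈ cellsOfBetaSet S ↔ ∃ b ∈ S, rIdx S b = x.1 ∧ x.2 < rLen S b := by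
  obtain ⟨i, j⟩ := x
  rw [cells_eq]
  simp only [Finset.mem_biUnion, Finset.mem_image, Finset.mem_range, Prod.mk.injEq]
  constructor
  · rintro ⟨b, hb, j', hj', h1, h2⟩
    exact ⟨b, hb, h1, h2 ▸ hj'⟩
  · rintro ⟨b, hb, h1, h2⟩
    exact ⟨b, hb, j, h2, h1, rfl⟩

variable {b : ℕ}

lemma filter_row (hb : b ∈ S) (j : ℕ) :
    (cellsOfBetaSet S).filter (fun y => y.1 = rIdx S b ∧ j < y.2)
      = (Finset.Ico (j + 1) (rLen S b)).image fun j' => (rIdx S b, j') := by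
  ext ⟨i', j'⟩
  simp only [Finset.mem_filter, mem_cellsOfBetaSet, Finset.mem_image, Finset.mem_Ico,
    Prod.mk.injEq]
  constructor
  · rintro ⟨⟨b', hb', h1, h2⟩, h3, h4⟩
    have hbb : b' = b := rIdx_injOn hb' hb (by rw [h1, h3])
    subst hbb
    exact ⟨j', ⟨by omega, h2⟩, h3.symm, rfl⟩
  · rintro ⟨j'', ⟨hj1, hj2⟩, h1, h2⟩
    subst h2
    exact ⟨⟨b, hb, h1, hj2⟩, h1.symm, by omega⟩

lemma arm_card (hb : b ∈ S) {j : ℕ} (hj : j < rLen S b) :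
    ((cellsOfBetaSet S).filter fun y => y.1 = rIdx S b ∧ j < y.2).card = rLen S b - j - 1 := by
  rw [filter_row hb, Finset.card_image_of_injective _ (fun a b h => by simpa using h)]
  simp [Nat.card_Ico]
  omega

lemma filter_col (hb : b ∈ S) (j : ℕ) :
    (cellsOfBetaSet S).filter (fun y => y.2 = j ∧ rIdx S b < y.1)
      = (S.filter fun b' => b' < b ∧ j < rLen S b').image fun b' => (rIdx S b', j) := by
  ext ⟨i', j'⟩
  simp only [Finset.mem_filter, mem_cellsOfBetaSet, Finset.mem_image, Prod.mk.injEq]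
  constructor
  · rintro ⟨⟨b', hb', h1, h2⟩, h3, h4⟩
    subst h3
    refine ⟨b', ⟨hb', ?_, h2⟩, h1, rfl⟩
    by_contra hh
    have hble : b ≤ b' := Nat.le_of_not_lt hh
    rcases eq_or_lt_of_le hble with rfl | hlt
    · omega
    · have := rIdx_lt hb' hlt
      omega
  · rintro ⟨b', ⟨hb', hlt, hjl⟩, h1, h2⟩
    subst h2
    exact ⟨⟨b', hb', h1, hjl⟩, rfl, h1 ▸ rIdx_lt hb hlt⟩

lemma leg_card (hb : b ∈ S) (j : ℕ) :
    ((cellsOfBetaSet S).filter fun y => y.2 = j ∧ rIdx S b < y.1).card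
      = (S.filter fun b' => b' < b ∧ j < rLen S b').card := by
  rw [filter_col hb j]
  apply Finset.card_image_of_injOn
  intro a ha c hc h
  exact rIdx_injOn (Finset.mem_filter.1 ha).1 (Finset.mem_filter.1 hc).1
    (congrArg Prod.fst h)

lemma hook_eq (hb : b ∈ S) {j : ℕ} (hj : j < rLen S b) :
    hookFin (cellsOfBetaSet S) (rIdx S b, j)
      = rLen S b - j + (S.filter fun b' => b' < b ∧ j < rLen S b').card := by
  unfold hookFin
  simp only
  rw [arm_card hb hj, leg_card hb j]
  omega

lemma T_card (b : ℕ) : ((Finset.range b).filter fun c => c ∉ S).card = rLen S b := by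
  have h1 := Finset.card_filter_add_card_filter_not
    (s := Finset.range b) (p := fun c => c ∈ S)
  have h2 : (Finset.range b).filter (fun c => c ∈ S) = S.filter fun a => a < b := by
    ext a
    simp only [Finset.mem_filter, Finset.mem_range]
    tauto
  have h3 : ((Finset.range b).filter fun c => ¬ c ∈ S) = (Finset.range b).filter fun c => c ∉ S :=
    rfl
  rw [h2, h3] at h1
  simp only [Finset.card_range] at h1
  have h4 := cCnt_le (S := S) b
  unfold rLen cCnt at *
  omega

lemma T_injOn (b : ℕ) : Set.InjOn (rLen S) ↑((Finset.range b).filter fun c => c ∉ S) := by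
  intro a ha c hc h
  simp only [Finset.coe_filter, Set.mem_setOf_eq, Finset.mem_range] at ha hc
  rcases lt_trichotomy a c with hl | hl | hl
  · have := rLen_lt_rLen ha.2 hl; omega
  · exact hl
  · have := rLen_lt_rLen hc.2 hl; omega

lemma g_maps (hb : b ∈ S) :
    ((Finset.range b).filter fun c => c ∉ S).image (rLen S) = Finset.range (rLen S b) := by
  apply Finset.eq_of_subset_of_card_le
  · intro x hx
    simp only [Finset.mem_image, Finset.mem_filter, Finset.mem_range] at hx ⊢
    obtain ⟨c, ⟨hc1, hc2⟩, rfl⟩ := hx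
    exact rLen_lt_rLen hc2 hc1
  · rw [Finset.card_image_of_injOn (T_injOn b), T_card b, Finset.card_range]

lemma row_hooks (hb : b ∈ S) :
    (Multiset.range (rLen S b)).map (fun j => hookFin (cellsOfBetaSet S) (rIdx S b, j))
      = ((Finset.range b).filter fun c => c ∉ S).val.map fun c => b - c := by
  have h1 : (Multiset.range (rLen S b)) = (Finset.range (rLen S b)).val := rfl
  rw [h1, ← g_maps hb, Finset.image_val_of_injOn (T_injOn b), Multiset.map_map]
  apply Multiset.map_congr rfl
  intro c hc
  have hcT : c ∈ (Finset.range b).filter fun c => c ∉ S := hc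
  simp only [Finset.mem_filter, Finset.mem_range] at hcT
  obtain ⟨hcb, hcS⟩ := hcT
  simp only [Function.comp_apply]
  rw [hook_eq hb (rLen_lt_rLen hcS hcb)]
  have hfe : (S.filter fun b' => b' < b ∧ rLen S c < rLen S b')
      = S.filter fun a => c ≤ a ∧ a < b := by
    apply Finset.filter_congr
    intro a ha
    rw [rLen_lt_iff ha hcS]
    constructor
    · rintro ⟨x, y⟩; exact ⟨le_of_lt y, x⟩
    · rintro ⟨x, y⟩
      exact ⟨y, lt_of_le_of_ne x fun h => hcS (h ▸ ha)⟩
  rw [hfe]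
  have hsplit := cCnt_split (S := S) (le_of_lt hcb)
  have h2 := card_between_le' hcS b
  have h3 := cCnt_le (S := S) c
  have h4 := cCnt_le (S := S) b
  have h5 := rLen_lt_rLen hcS hcb
  unfold rLen at *
  omega

lemma val_map_eq_sum {β γ : Type*} (s : Finset β) (f : β → γ) :
    s.val.map f = ∑ x ∈ s, ({f x} : Multiset γ) := by
  induction s using Finset.cons_induction with
  | empty => simp
  | cons a s ha ih =>
    rw [Finset.sum_cons, ← ih, Finset.cons_val, Multiset.map_cons, Multiset.singleton_add]

lemma hookMultiset_beta (S : Finset ℕ) :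
    hookMultiset (cellsOfBetaSet S)
      = ∑ b ∈ S, ((Finset.range b).filter fun c => c ∉ S).val.map fun c => b - c := by
  have hdisj : Set.PairwiseDisjoint (S : Set ℕ)
      (fun b => (Finset.range (rLen S b)).image fun j => ((rIdx S b, j) : ℕ × ℕ)) := by
    intro a ha b hb hab
    simp only [Function.onFun]
    rw [Finset.disjoint_left]
    rintro x hx1 hx2
    simp only [Finset.mem_image, Finset.mem_range] at hx1 hx2
    obtain ⟨j1, _, rfl⟩ := hx1
    obtain ⟨j2, _, he⟩ := hx2
    have he2 : rIdx S b = rIdx S a := congrArg Prod.fst he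
    exact hab (rIdx_injOn hb ha he2).symm
  rw [hookMultiset, val_map_eq_sum, cells_eq S, Finset.sum_biUnion hdisj]
  refine Finset.sum_congr rfl fun b hb => ?_
  rw [Finset.sum_image (fun x hx y hy h => by simpa using congrArg Prod.snd h), ← cells_eq S]
  exact (val_map_eq_sum (Finset.range (rLen S b))
    (fun j => hookFin (cellsOfBetaSet S) (rIdx S b, j))).symm.trans (row_hooks hb)

section Beta

variable (k : ℕ) (lam : YoungDiagram)

/-- The labelling function of the beta-set. -/
def bfun (i : ℕ) : ℕ := lam.rowLen i + (numRowsPad k lam - 1 - i)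

lemma betaSet_eq : betaSet k lam = (Finset.range (numRowsPad k lam)).image (bfun k lam) := rfl

variable {k lam}

lemma bfun_anti {i i' : ℕ} (hi' : i' < numRowsPad k lam) (h : i < i') :
    bfun k lam i' < bfun k lam i := by
  have hr := lam.rowLen_anti i i' (le_of_lt h)
  unfold bfun
  omega

lemma bfun_injOn : Set.InjOn (bfun k lam) ↑(Finset.range (numRowsPad k lam)) := by
  intro a ha b hb hab
  simp only [Finset.coe_range, Set.mem_Iio] at ha hb
  rcases lt_trichotomy a b with h | h | h
  · have := bfun_anti hb h; omega
  · exact h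
  · have := bfun_anti ha h; omega

lemma rIdx_beta {i : ℕ} (hi : i < numRowsPad k lam) :
    rIdx (betaSet k lam) (bfun k lam i) = i := by
  unfold rIdx
  rw [betaSet_eq, Finset.filter_image]
  have h1 : ((Finset.range (numRowsPad k lam)).filter fun a => bfun k lam i < bfun k lam a)
      = Finset.range i := by
    ext i'
    simp only [Finset.mem_filter, Finset.mem_range]
    constructor
    · rintro ⟨h2, h3⟩
      by_contra hh
      have hii' : i ≤ i' := Nat.le_of_not_lt hh
      rcases eq_or_lt_of_le hii' with rfl | hlt
      · omega
      · have := bfun_anti h2 hlt; omega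
    · intro h2
      exact ⟨by omega, bfun_anti hi h2⟩
  rw [h1, Finset.card_image_of_injOn (bfun_injOn.mono (by
    intro a ha
    simp only [Finset.coe_range, Set.mem_Iio] at ha ⊢
    omega)), Finset.card_range]

lemma cCnt_beta {i : ℕ} (hi : i < numRowsPad k lam) :
    cCnt (betaSet k lam) (bfun k lam i) = numRowsPad k lam - 1 - i := by
  unfold cCnt
  rw [betaSet_eq, Finset.filter_image]
  have h1 : ((Finset.range (numRowsPad k lam)).filter fun a => bfun k lam a < bfun k lam i)
      = Finset.Ico (i + 1) (numRowsPad k lam) := by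
    ext i'
    simp only [Finset.mem_filter, Finset.mem_range, Finset.mem_Ico]
    constructor
    · rintro ⟨h2, h3⟩
      refine ⟨?_, h2⟩
      by_contra hh
      have hii' : i' ≤ i := by omega
      rcases eq_or_lt_of_le hii' with rfl | hlt
      · omega
      · have := bfun_anti hi hlt; omega
    · rintro ⟨h2, h3⟩
      exact ⟨h3, bfun_anti h3 (by omega)⟩
  rw [h1, Finset.card_image_of_injOn (bfun_injOn.mono (by
    intro a ha
    simp only [Finset.coe_Ico, Set.mem_Ico, Finset.coe_range, Set.mem_Iio] at ha ⊢
    omega)), Nat.card_Ico]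
  omega

lemma rLen_beta {i : ℕ} (hi : i < numRowsPad k lam) :
    rLen (betaSet k lam) (bfun k lam i) = lam.rowLen i := by
  unfold rLen
  rw [cCnt_beta hi]
  unfold bfun
  omega

lemma colLen_le_numRowsPad (hk : 0 < k) : lam.colLen 0 ≤ numRowsPad k lam := by
  unfold numRowsPad
  have h1 : k * ((lam.colLen 0 + k - 1) / k) + (lam.colLen 0 + k - 1) % k
      = lam.colLen 0 + k - 1 := Nat.div_add_mod _ _
  have h2 : (lam.colLen 0 + k - 1) % k < k := Nat.mod_lt _ hk
  omega

lemma cells_eq_betaSet (hk : 0 < k) : lam.cells = cellsOfBetaSet (betaSet k lam) := by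
  ext x
  obtain ⟨i, j⟩ := x
  rw [mem_cellsOfBetaSet]
  constructor
  · intro h
    have hj : j < lam.rowLen i :=
      YoungDiagram.mem_iff_lt_rowLen.1 ((YoungDiagram.mem_cells _).1 h)
    have hi0 : (i, 0) ∈ lam :=
      lam.up_left_mem (le_refl i) (Nat.zero_le j) ((YoungDiagram.mem_cells _).1 h)
    have hi : i < numRowsPad k lam :=
      lt_of_lt_of_le (YoungDiagram.mem_iff_lt_colLen.1 hi0) (colLen_le_numRowsPad hk)
    refine ⟨bfun k lam i, ?_, ?_, ?_⟩
    · rw [betaSet_eq]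
      exact Finset.mem_image.2 ⟨i, Finset.mem_range.2 hi, rfl⟩
    · exact rIdx_beta hi
    · rw [rLen_beta hi]; exact hj
  · rintro ⟨b, hbB, hidx, hlen⟩
    rw [betaSet_eq] at hbB
    obtain ⟨i', hi', rfl⟩ := Finset.mem_image.1 hbB
    rw [Finset.mem_range] at hi'
    have : i' = i := by rw [rIdx_beta hi'] at hidx; exact hidx
    subst this
    rw [rLen_beta hi'] at hlen
    exact (YoungDiagram.mem_cells _).2 (YoungDiagram.mem_iff_lt_rowLen.2 hlen)

end Beta

section Arith

variable {k : ℕ}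

lemma eq_of_div_mod {a c : ℕ} (h1 : a % k = c % k) (h2 : a / k = c / k) : a = c := by
  have ha := Nat.div_add_mod a k
  rw [h1, h2] at ha
  have hc := Nat.div_add_mod c k
  omega

lemma mod_sub_div (hk : 0 < k) {c b : ℕ} (hcb : c ≤ b) (h : c % k = b % k) :
    b - c = k * (b / k - c / k) := by
  rw [Nat.mul_sub]
  have h1 := Nat.div_add_mod b k
  have h2 := Nat.div_add_mod c k
  rw [h] at h2
  omega

lemma dvd_sub_iff_mod (hk : 0 < k) {c b : ℕ} (hcb : c ≤ b) :
    k ∣ b - c ↔ c % k = b % k := by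
  constructor
  · rintro ⟨m, hm⟩
    have hb : b = k * m + c := by omega
    rw [hb, Nat.mul_add_mod]
  · intro h
    exact ⟨b / k - c / k, mod_sub_div hk hcb h⟩

lemma div_lt_div_of_mod (hk : 0 < k) {c b : ℕ} (h : c % k = b % k) (hcb : c < b) :
    c / k < b / k := by
  have h1 := Nat.div_add_mod b k
  have h2 := Nat.div_add_mod c k
  have h3 : c / k ≤ b / k := Nat.div_le_div_right (le_of_lt hcb)
  rcases eq_or_lt_of_le h3 with he | hl
  · rw [h, he] at h2
    omega
  · exact hl

end Arith

section PerB

variable {k : ℕ}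

lemma per_b (hk : 0 < k) (B : Finset ℕ) {b : ℕ} (hb : b ∈ B) :
    (Multiset.map (fun h => h / k) (Multiset.filter (fun h => k ∣ h)
        (((Finset.range b).filter fun c => c ∉ B).val.map fun c => b - c)))
      = ((Finset.range (b / k)).filter fun c' =>
            c' ∉ (B.filter fun a => a % k = b % k).image fun a => a / k).val.map
          fun c' => b / k - c' := by
  rw [Multiset.filter_map, Multiset.map_map]
  have h1 : Multiset.filter ((fun h => k ∣ h) ∘ fun c => b - c)
        ((Finset.range b).filter fun c => c ∉ B).val
      = (((Finset.range b).filter fun c => c ∉ B).filter fun c => k ∣ b - c).val := by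
    rw [Finset.filter_val]
    exact Multiset.filter_congr fun x _ => Iff.rfl
  rw [h1]
  have h2 : (((Finset.range b).filter fun c => c ∉ B).filter fun c => k ∣ b - c)
      = (Finset.range b).filter fun c => c ∉ B ∧ c % k = b % k := by
    rw [Finset.filter_filter]
    apply Finset.filter_congr
    intro c hc
    rw [Finset.mem_range] at hc
    rw [dvd_sub_iff_mod hk (le_of_lt hc)]
  rw [h2]
  set L := (Finset.range b).filter fun c => c ∉ B ∧ c % k = b % k with hL
  have hinj : Set.InjOn (fun c => c / k) ↑L := by
    intro a ha c hc h
    simp only [hL, Finset.coe_filter, Set.mem_setOf_eq] at ha hc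
    exact eq_of_div_mod (ha.2.2.trans hc.2.2.symm) h
  have himg : L.image (fun c => c / k)
      = (Finset.range (b / k)).filter fun c' =>
          c' ∉ (B.filter fun a => a % k = b % k).image fun a => a / k := by
    ext c'
    simp only [Finset.mem_image, Finset.mem_filter, Finset.mem_range, hL]
    constructor
    · rintro ⟨c, ⟨hcb, hcB, hcm⟩, rfl⟩
      refine ⟨div_lt_div_of_mod hk hcm hcb, ?_⟩
      rintro ⟨a, ⟨haB, ham⟩, had⟩
      exact hcB (by rwa [eq_of_div_mod (ham.trans hcm.symm) had] at haB)
    · rintro ⟨hc', hc'n⟩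
      refine ⟨k * c' + b % k, ⟨?_, ?_, ?_⟩, ?_⟩
      · have h3 := Nat.div_add_mod b k
        have h4 : k * c' < k * (b / k) := mul_lt_mul_of_pos_left hc' hk
        omega
      · intro hmem
        apply hc'n
        refine ⟨k * c' + b % k, ⟨hmem, ?_⟩, ?_⟩
        · rw [Nat.mul_add_mod]
          exact Nat.mod_mod_of_dvd _ dvd_rfl
        · rw [Nat.mul_add_div hk, Nat.div_eq_of_lt (Nat.mod_lt _ hk), Nat.add_zero]
      · rw [Nat.mul_add_mod]
        exact Nat.mod_mod_of_dvd _ dvd_rfl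
      · rw [Nat.mul_add_div hk, Nat.div_eq_of_lt (Nat.mod_lt _ hk), Nat.add_zero]
  rw [← himg, Finset.image_val_of_injOn hinj, Multiset.map_map]
  apply Multiset.map_congr rfl
  intro c hc
  have hcL : c ∈ L := hc
  simp only [hL, Finset.mem_filter, Finset.mem_range] at hcL
  obtain ⟨hcb, _, hcm⟩ := hcL
  simp only [Function.comp_apply]
  rw [mod_sub_div hk (le_of_lt hcb) hcm, Nat.mul_div_cancel_left _ hk]

end PerB

lemma filter_sum_multiset {α : Type*} (s : Finset α) (f : α → Multiset ℕ) (p : ℕ → Prop)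
    [DecidablePred p] :
    (∑ b ∈ s, f b).filter p = ∑ b ∈ s, (f b).filter p := by
  induction s using Finset.cons_induction with
  | empty => simp
  | cons a s ha ih => simp [Finset.sum_cons, Finset.sum_insert ha, Multiset.filter_add, ih]

lemma map_sum_multiset {α : Type*} (s : Finset α) (f : α → Multiset ℕ) (g : ℕ → ℕ) :
    (∑ b ∈ s, f b).map g = ∑ b ∈ s, (f b).map g := by
  induction s using Finset.cons_induction with
  | empty => simp
  | cons a s ha ih => simp [Finset.sum_cons, Finset.sum_insert ha, Multiset.map_add, ih]

end HookAux

/-- the multiset of hook lengths of `λ` divisible by `k`, each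
divided by `k`, is the disjoint union of the hook length multisets of the
components of the `k`-quotient. -/
theorem hook_lengths_quotient (k : ℕ) (hk : 0 < k) (lam : YoungDiagram)
    (hcore : EmptyKCore k lam) :
    (((hookMultiset lam.cells).filter fun h => k ∣ h).map fun h => h / k) =
      ∑ i : Fin k, hookMultiset (kQuotientCells k lam i) := by
  classical
  rw [HookAux.cells_eq_betaSet hk, HookAux.hookMultiset_beta,
      HookAux.filter_sum_multiset, HookAux.map_sum_multiset]
  have hq : ∀ i : Fin k, hookMultiset (kQuotientCells k lam i)
      = ∑ b' ∈ ((betaSet k lam).filter fun b => b % k = (i : ℕ)).image fun b => b / k,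
          (((Finset.range b').filter fun c =>
              c ∉ ((betaSet k lam).filter fun b => b % k = (i : ℕ)).image fun b => b / k).val.map
            fun c => b' - c) := fun i => HookAux.hookMultiset_beta _
  have hR : (∑ i : Fin k, hookMultiset (kQuotientCells k lam i))
      = ∑ b ∈ betaSet k lam, (((Finset.range (b / k)).filter fun c' =>
            c' ∉ ((betaSet k lam).filter fun a => a % k = b % k).image fun a => a / k).val.map
          fun c' => b / k - c') := by
    rw [← Finset.sum_fiberwise_of_maps_to
        (g := fun b => (⟨b % k, Nat.mod_lt b hk⟩ : Fin k))
        (t := (Finset.univ : Finset (Fin k)))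
        (fun b _ => Finset.mem_univ _)
        (f := fun b => (((Finset.range (b / k)).filter fun c' =>
            c' ∉ ((betaSet k lam).filter fun a => a % k = b % k).image fun a => a / k).val.map
          fun c' => b / k - c'))]
    apply Finset.sum_congr rfl
    intro i _
    rw [hq i, Finset.sum_image (by
      intro x hx y hy h
      simp only [Finset.mem_coe, Finset.mem_filter] at hx hy
      exact HookAux.eq_of_div_mod (hx.2.trans hy.2.symm) h)]
    apply Finset.sum_congr
    · apply Finset.filter_congr
      intro b _
      constructor
      · intro h
        exact (Fin.ext h : (⟨b % k, Nat.mod_lt b hk⟩ : Fin k) = i)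
      · intro h
        exact congrArg Fin.val h
    · intro b hb
      simp only [Finset.mem_filter] at hb
      have hbm : b % k = (i : ℕ) := congrArg Fin.val hb.2
      rw [show ((i : ℕ)) = b % k from hbm.symm]
  rw [hR]
  exact Finset.sum_congr rfl fun b hb => HookAux.per_b hk _ hb


end BorderStrips
end
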